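/- arXiv:1903.02989 — 4 statements merged into one kernel-verified Lean document; each statement's English description precedes it below -/
import Mathlib

section
/- If (D_k)_{k∈ℤ} is a family of linear subspaces of A with D_k ⊆ A_k for every k ∈ ℤ, and the algebraic sum ∑_{k∈ℤ} D_k is dense in A, then for every k ∈ ℤ the norm-closure of D_k equals A_k. -/
/-!
Averaging `t ↦ t⁻ᵏ • ρ t a` against the normalized Haar measure gives a contraction `Λ_k`.
Since `∫ tᵐ = 0` for `m ≠ 0` (a translate by some `s` with `sᵐ = -1` negates the integrand),
`Λ_k` is the identity on `A_k` and vanishes on `A_j` for `j ≠ k`. So `Λ_k` maps the dense sum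
`∑ D_j` into `D_k`, and by continuity every `a = Λ_k a ∈ A_k` lies in the closure of `D_k`.
-/

open MeasureTheory

lemma Circle.coe_exp_pi : (Circle.exp Real.pi : ℂ) = -1 := by
  simp [Circle.coe_exp, Complex.exp_pi_mul_I]

lemma Circle.continuous_coe_zpow (k : ℤ) : Continuous fun t : Circle => (t : ℂ) ^ k := by
  simp_rw [← Circle.coe_zpow]
  exact continuous_subtype_val.comp (continuous_zpow k)

lemma Circle.integral_coe_zpow [MeasurableSpace Circle] [BorelSpace Circle] {μ : Measure Circle}
    [IsProbabilityMeasure μ] [μ.IsMulLeftInvariant] (m : ℤ) :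
    ∫ t, (t : ℂ) ^ m ∂μ = if m = 0 then 1 else 0 := by
  split_ifs with hm
  · simp [hm]
  · refine integral_eq_zero_of_mul_left_eq_neg (g := Circle.exp (Real.pi / m)) fun t => ?_
    have : Circle.exp (Real.pi / m) ^ m = Circle.exp Real.pi := by
      rw [← Circle.exp_intCast_mul, mul_div_cancel₀ _ (Int.cast_ne_zero.2 hm)]
    rw [Circle.coe_mul, mul_zpow, ← Circle.coe_zpow, this, Circle.coe_exp_pi, neg_one_mul]

section SpectralProjection

variable {A : Type*} [NormedAddCommGroup A] [NormedSpace ℂ A]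

def spectralSubspace (ρ : Circle → A ≃ₗᵢ[ℂ] A) (k : ℤ) : Set A :=
  {a | ∀ t : Circle, ρ t a = ((t : ℂ) ^ k) • a}

lemma isClosed_spectralSubspace (ρ : Circle → A ≃ₗᵢ[ℂ] A) (k : ℤ) :
    IsClosed (spectralSubspace ρ k) := by
  simp only [spectralSubspace, Set.ofPred_forall]
  exact isClosed_iInter fun t => isClosed_eq (ρ t).continuous (continuous_const_smul _)

variable [MeasurableSpace Circle] [BorelSpace Circle]
  {ρ : Circle → A ≃ₗᵢ[ℂ] A} (hρ : ∀ a : A, Continuous fun t : Circle => ρ t a)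
  (μ : Measure Circle) [IsProbabilityMeasure μ]

include hρ in
lemma integrable_zpow_smul_apply (k : ℤ) (a : A) :
    Integrable (fun t : Circle => (t : ℂ) ^ k • ρ t a) μ :=
  ((Circle.continuous_coe_zpow k).smul (hρ a)).integrable_of_hasCompactSupport
    (HasCompactSupport.of_compactSpace _)

noncomputable def spectralProjection (k : ℤ) : A →L[ℂ] A :=
  LinearMap.mkContinuous
    { toFun := fun a => ∫ t, (t : ℂ) ^ (-k) • ρ t a ∂μ
      map_add' := fun a b => by
        simp only [map_add, smul_add]
        exact integral_add (integrable_zpow_smul_apply hρ μ _ a)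
          (integrable_zpow_smul_apply hρ μ _ b)
      map_smul' := fun c a => by
        simp only [map_smul, smul_comm _ c, integral_smul, RingHom.id_apply] }
    1 fun a => by
      refine (norm_integral_le_integral_norm _).trans_eq ?_
      simp [norm_smul, Circle.norm_coe]

lemma spectralProjection_apply (k : ℤ) (a : A) :
    spectralProjection hρ μ k a = ∫ t, (t : ℂ) ^ (-k) • ρ t a ∂μ := rfl

variable [CompleteSpace A]

lemma spectralProjection_apply_of_mem [μ.IsMulLeftInvariant] {j : ℤ} {a : A}
    (ha : a ∈ spectralSubspace ρ j) (k : ℤ) :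
    spectralProjection hρ μ k a = if j = k then a else 0 := by
  have (t : Circle) : (t : ℂ) ^ (-k) • ρ t a = (t : ℂ) ^ (j - k) • a := by
    rw [ha t, smul_smul, ← zpow_add₀ t.coe_ne_zero, neg_add_eq_sub]
  simp_rw [spectralProjection_apply, this, integral_smul_const, Circle.integral_coe_zpow,
    sub_eq_zero]
  split_ifs <;> simp

lemma spectralProjection_map_iSup_le [μ.IsMulLeftInvariant] {D : ℤ → Submodule ℂ A}
    (hD : ∀ j, (D j : Set A) ⊆ spectralSubspace ρ j) (k : ℤ) :
    (⨆ j, D j).map (spectralProjection hρ μ k : A →ₗ[ℂ] A) ≤ D k := by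
  rw [Submodule.map_iSup, iSup_le_iff]
  rintro j _ ⟨a, ha, rfl⟩
  rw [ContinuousLinearMap.coe_coe, spectralProjection_apply_of_mem hρ μ (hD j ha)]
  split_ifs with hjk
  · exact hjk ▸ ha
  · exact (D k).zero_mem

include hρ in
theorem closure_eq_spectralSubspace_of_dense_iSup [μ.IsMulLeftInvariant]
    {D : ℤ → Submodule ℂ A}
    (hD : ∀ j, (D j : Set A) ⊆ spectralSubspace ρ j)
    (hdense : Dense ((⨆ j, D j : Submodule ℂ A) : Set A)) (k : ℤ) :
    closure (D k : Set A) = spectralSubspace ρ k := by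
  refine (closure_minimal (hD k) (isClosed_spectralSubspace ρ k)).antisymm fun a ha => ?_
  have hfix : spectralProjection hρ μ k a = a := by
    simpa using spectralProjection_apply_of_mem hρ μ ha k
  rw [← hfix]
  exact map_mem_closure (spectralProjection hρ μ k).continuous (hdense a)
    fun b hb => spectralProjection_map_iSup_le hρ μ hD k ⟨b, hb, rfl⟩

end SpectralProjection

theorem stmt3_general
    {A : Type*} [NormedAddCommGroup A] [NormedSpace ℂ A] [CompleteSpace A]
    [MeasurableSpace Circle] [BorelSpace Circle]
    (ρ : Circle → A ≃ₗᵢ[ℂ] A)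
    (hρ_cont : ∀ a : A, Continuous fun t : Circle => ρ t a)
    (D : ℤ → Submodule ℂ A)
    (hD : ∀ k : ℤ, (D k : Set A) ⊆ {a : A | ∀ t : Circle, ρ t a = ((t : ℂ) ^ k) • a})
    (hdense : Dense ((⨆ k : ℤ, D k : Submodule ℂ A) : Set A)) :
    ∀ k : ℤ, closure (D k : Set A) = {a : A | ∀ t : Circle, ρ t a = ((t : ℂ) ^ k) • a} := by
  let μ : Measure Circle := Measure.haarMeasure ⊤
  have : IsProbabilityMeasure μ := ⟨Measure.haarMeasure_self⟩
  exact closure_eq_spectralSubspace_of_dense_iSup hρ_cont μ hD hdense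

/-- If `(D_k)_{k ∈ ℤ}` is a family of linear subspaces of `A` with
`D_k ⊆ A_k` for all `k`, and the algebraic sum `∑_k D_k` (the submodule `⨆ k, D k`)
is dense in `A`, then the norm-closure of `D_k` equals the spectral subspace `A_k`
for every `k`. -/
theorem stmt3
    {A : Type*} [NormedAddCommGroup A] [NormedSpace ℂ A] [CompleteSpace A]
    [MeasurableSpace Circle] [BorelSpace Circle]
    (ρ : Circle → A ≃ₗᵢ[ℂ] A)
    (hρ_mul : ∀ s t : Circle, ∀ a : A, ρ (s * t) a = ρ s (ρ t a))
    (hρ_one : ∀ a : A, ρ 1 a = a)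
    (hρ_cont : ∀ a : A, Continuous fun t : Circle => ρ t a)
    (D : ℤ → Submodule ℂ A)
    (hD : ∀ k : ℤ, (D k : Set A) ⊆ {a : A | ∀ t : Circle, ρ t a = ((t : ℂ) ^ k) • a})
    (hdense : Dense ((⨆ k : ℤ, D k : Submodule ℂ A) : Set A)) :
    ∀ k : ℤ, closure (D k : Set A) = {a : A | ∀ t : Circle, ρ t a = ((t : ℂ) ^ k) • a} :=
  stmt3_general ρ hρ_cont D hD hdense
end

section
/- Assume n ≥ 2. The map [(z, x, w)] ↦ ((x_1, w_1), [(z + x_1, (x_2, …, x_n), (w_2, …, w_n))]) is a well-defined bijection from {g ∈ F_n : w_1 ≠ ∞} onto {(a, b) ∈ ℤ × ℕ : a + b ≥ 0} × F_{n−1}, and it converts the product of F_n into the componentwise product, where the first components multiply by (a, v_1) · (a', w'_1) := (a + a', w'_1), defined when v_1 = a' + w'_1, and the second components multiply by the product of F_{n−1}. -/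
/-! Common setup for the groupoid `F_n` of the quantum sphere `S_q^{2n+1}`. -/

/-- `x_i + w_i ≥ 0` for all `i` (vacuous at coordinates where `w_i = ∞`). -/
def okPos {n : ℕ} (x : Fin n → ℤ) (w : Fin n → ℕ∞) : Prop :=
  ∀ i, ∀ m : ℕ, w i = (m : ℕ∞) → 0 ≤ x i + (m : ℤ)

/-- The defining condition of `F̃_n`: whenever `w_i = ∞`,
`x_i = -z - x_1 - ⋯ - x_{i-1}` and `x_j = 0` for `j > i`. -/
def condF {n : ℕ} (z : ℤ) (x : Fin n → ℤ) (w : Fin n → ℕ∞) : Prop :=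
  ∀ i, w i = ⊤ → (x i = -z - ∑ j ∈ Finset.Iio i, x j) ∧ (∀ j, i < j → x j = 0)

/-- The set `F̃_n` of admissible triples `(z, x, w)`. -/
abbrev FTil (n : ℕ) : Type :=
  {p : ℤ × (Fin n → ℤ) × (Fin n → ℕ∞) // okPos p.2.1 p.2.2 ∧ condF p.1 p.2.1 p.2.2}

/-- `ν(w)`: keep coordinates before the first `∞`, replace all later ones by `∞`. -/
def qnu {n : ℕ} (w : Fin n → ℕ∞) : Fin n → ℕ∞ :=
  fun i => if ∃ j, j ≤ i ∧ w j = ⊤ then ⊤ else w i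

/-- Addition of an integer to an extended natural number (`a + ∞ = ∞`). -/
def addZN (a : ℤ) (b : ℕ∞) : ℕ∞ :=
  if b = ⊤ then ⊤ else (((a + (b.toNat : ℤ)).toNat : ℕ) : ℕ∞)

/-- Coordinatewise sum `x + w`. -/
def addxw {n : ℕ} (x : Fin n → ℤ) (w : Fin n → ℕ∞) : Fin n → ℕ∞ :=
  fun i => addZN (x i) (w i)

/-- The relation `(z, x, w) ∼ (z', x', w')` iff `z = z'`, `x = x'`, `ν(w) = ν(w')`. -/
def FRel {n : ℕ} (a b : FTil n) : Prop :=
  a.val.1 = b.val.1 ∧ a.val.2.1 = b.val.2.1 ∧ qnu a.val.2.2 = qnu b.val.2.2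

instance FSetoid (n : ℕ) : Setoid (FTil n) where
  r := FRel
  iseqv := ⟨fun _ => ⟨rfl, rfl, rfl⟩, fun h => ⟨h.1.symm, h.2.1.symm, h.2.2.symm⟩,
    fun h1 h2 => ⟨h1.1.trans h2.1, h1.2.1.trans h2.2.1, h1.2.2.trans h2.2.2⟩⟩

/-- The groupoid `F_n = F̃_n / ∼`. -/
abbrev Fgpd (n : ℕ) : Type := Quotient (FSetoid n)

/-- The `z`-component of a class in `F_n`. -/
def qzp {n : ℕ} (g : Fgpd n) : ℤ :=
  Quotient.lift (fun a : FTil n => a.val.1) (fun a b h => (h : FRel a b).1) g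

/-- The `x`-component of a class in `F_n`. -/
def qxp {n : ℕ} (g : Fgpd n) : Fin n → ℤ :=
  Quotient.lift (fun a : FTil n => a.val.2.1) (fun a b h => (h : FRel a b).2.1) g

/-- The source `ν(w)` of a class in `F_n`. -/
def qsrc {n : ℕ} (g : Fgpd n) : Fin n → ℕ∞ :=
  Quotient.lift (fun a : FTil n => qnu a.val.2.2) (fun a b h => (h : FRel a b).2.2) g

/-- The target `ν(x + w)` of a class in `F_n` (computed on a representative). -/
noncomputable def qtgt {n : ℕ} (g : Fgpd n) : Fin n → ℕ∞ :=
  qnu (addxw g.out.val.2.1 g.out.val.2.2)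

/-- `qIsMul g h p` states that the product `g · h` is defined and equals `p`:
the source of `g` equals the target of `h`, and `p = [(z + z', x + x', w')]`
(a class in `F_n` is determined by its `z`-, `x`-components and its source). -/
def qIsMul {n : ℕ} (g h p : Fgpd n) : Prop :=
  qsrc g = qtgt h ∧ qzp p = qzp g + qzp h ∧
    (∀ i, qxp p i = qxp g i + qxp h i) ∧ qsrc p = qsrc h

/-- The subset `(F_n)_{k,j}` of classes of degree `k` whose source vanishes in the
first `j` coordinates. -/
def Fkj (n : ℕ) (k : ℤ) (j : ℕ) : Set (Fgpd n) :=
  {g : Fgpd n | qzp g = k ∧ ∀ i : Fin n, (i : ℕ) < j → qsrc g i = 0}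

/-!
A class `g` with `w₁ ≠ ∞` has the canonical representative `(z, x, ν(w))`, whose first source
coordinate is finite. For a finite first coordinate `ν` commutes with prepending or dropping it,
and the conditions defining `F̃_n` for `(z, (a, x'), (b, w'))` amount to `a + b ≥ 0` together with
the conditions defining `F̃_{n-1}` for `(z + a, x', w')`. Since the target is `ν(x + w) = x + ν(w)`,
composability and products split coordinatewise in the same way.
-/

open Finset in
lemma Fin.sum_Iio_succ {M : Type*} [AddCommMonoid M] {n : ℕ} (f : Fin (n + 1) → M) (i : Fin n) :
    ∑ j ∈ Iio i.succ, f j = f 0 + ∑ j ∈ Iio i, f j.succ := by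
  rw [← Finset.Ico_bot, bot_eq_zero, ← Finset.Ioo_insert_left i.succ_pos,
    Finset.sum_insert (by simp), ← Fin.map_succEmb_Iio, Finset.sum_map]
  rfl

lemma addZN_eq_top_iff (a : ℤ) (b : ℕ∞) : addZN a b = ⊤ ↔ b = ⊤ := by
  unfold addZN
  split_ifs with h <;> simp [h]

lemma natCast_eq_addZN_iff {a : ℤ} {b c : ℕ} (hab : 0 ≤ a + b) :
    (c : ℕ∞) = addZN a b ↔ (c : ℤ) = a + b := by
  simp only [addZN, ENat.natCast_ne_top, if_false, ENat.toNat_natCast, Nat.cast_inj]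
  omega

section Nu

variable {n : ℕ}

lemma qnu_eq_top_iff (w : Fin n → ℕ∞) (i : Fin n) : qnu w i = ⊤ ↔ ∃ j ≤ i, w j = ⊤ := by
  unfold qnu
  split_ifs with h
  · simpa using h
  · exact ⟨fun hw => (h ⟨i, le_rfl, hw⟩).elim, fun h' => (h h').elim⟩

lemma qnu_idem (w : Fin n → ℕ∞) : qnu (qnu w) = qnu w := by
  funext i
  by_cases h : ∃ j ≤ i, w j = ⊤
  · rw [(qnu_eq_top_iff _ i).2 ⟨i, le_rfl, (qnu_eq_top_iff w i).2 h⟩, (qnu_eq_top_iff w i).2 h]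
  · refine if_neg ?_
    rintro ⟨j, hji, hj⟩
    obtain ⟨k, hkj, hk⟩ := (qnu_eq_top_iff w j).1 hj
    exact h ⟨k, hkj.trans hji, hk⟩

lemma qnu_addxw (x : Fin n → ℤ) (w : Fin n → ℕ∞) : qnu (addxw x w) = addxw x (qnu w) := by
  funext i
  simp only [qnu, addxw, addZN_eq_top_iff]
  split_ifs <;> simp [addZN]

lemma okPos_qnu {x : Fin n → ℤ} {w : Fin n → ℕ∞} (h : okPos x w) : okPos x (qnu w) := by
  intro i k hk
  have hfin : ¬ ∃ j ≤ i, w j = ⊤ := fun htop =>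
    ENat.top_ne_natCast k (((qnu_eq_top_iff w i).2 htop).symm.trans hk)
  exact h i k ((if_neg hfin).symm.trans hk)

lemma condF_qnu {z : ℤ} {x : Fin n → ℤ} {w : Fin n → ℕ∞} (h : condF z x w) :
    condF z x (qnu w) := by
  intro i hi
  obtain ⟨j, hji, hj⟩ := (qnu_eq_top_iff w i).1 hi
  obtain ⟨hxj, hzero⟩ := h j hj
  refine ⟨?_, fun k hk => hzero k (hji.trans_lt hk)⟩
  rcases hji.eq_or_lt with rfl | hji
  · exact hxj
  have hsum : ∑ k ∈ Finset.Iio i, x k = ∑ k ∈ Finset.Iic j, x k :=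
    (Finset.sum_subset (fun k hk => Finset.mem_Iio.2 ((Finset.mem_Iic.1 hk).trans_lt hji))
      fun k _ hk => hzero k (not_le.1 (mt Finset.mem_Iic.2 hk))).symm
  rw [hzero i hji, hsum, ← Finset.Iio_insert, Finset.sum_insert Finset.notMem_Iio_self, hxj]
  ring

end Nu

namespace Fgpd

variable {n : ℕ}

def mk (z : ℤ) (x : Fin n → ℤ) (w : Fin n → ℕ∞) (hpos : okPos x w) (hF : condF z x w) :
    Fgpd n :=
  ⟦⟨(z, x, w), hpos, hF⟩⟧

section mk

variable {z : ℤ} {x : Fin n → ℤ} {w : Fin n → ℕ∞} {hpos : okPos x w} {hF : condF z x w}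

@[simp] lemma qzp_mk : qzp (mk z x w hpos hF) = z := rfl

@[simp] lemma qxp_mk : qxp (mk z x w hpos hF) = x := rfl

@[simp] lemma qsrc_mk : qsrc (mk z x w hpos hF) = qnu w := rfl

end mk

lemma ext {g h : Fgpd n} (hz : qzp g = qzp h) (hx : qxp g = qxp h) (hs : qsrc g = qsrc h) :
    g = h := by
  induction g using Quotient.ind
  induction h using Quotient.ind
  exact Quotient.sound ⟨hz, hx, hs⟩

end Fgpd

section Representative

variable {n : ℕ}

lemma okPos_qsrc (g : Fgpd n) : okPos (qxp g) (qsrc g) := by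
  induction g using Quotient.ind with | _ a => exact okPos_qnu a.prop.1

lemma condF_qsrc (g : Fgpd n) : condF (qzp g) (qxp g) (qsrc g) := by
  induction g using Quotient.ind with | _ a => exact condF_qnu a.prop.2

lemma qnu_qsrc (g : Fgpd n) : qnu (qsrc g) = qsrc g := by
  induction g using Quotient.ind with | _ a => exact qnu_idem a.val.2.2

lemma qtgt_eq (g : Fgpd n) : qtgt g = addxw (qxp g) (qsrc g) := by
  conv_rhs => rw [← Quotient.out_eq g]
  exact qnu_addxw _ _

end Representative

section Cons

variable {m : ℕ}

lemma qnu_cons {b : ℕ∞} (hb : b ≠ ⊤) (w : Fin m → ℕ∞) :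
    qnu (Fin.cons b w : Fin (m + 1) → ℕ∞) = Fin.cons b (qnu w) := by
  funext i
  induction i using Fin.cases <;>
    simp [qnu, Fin.exists_fin_succ, Fin.succ_le_succ_iff, hb]

lemma okPos_cons_iff {a : ℤ} {b : ℕ∞} {x : Fin m → ℤ} {w : Fin m → ℕ∞} :
    okPos (Fin.cons a x : Fin (m + 1) → ℤ) (Fin.cons b w) ↔
      (∀ k : ℕ, b = k → 0 ≤ a + k) ∧ okPos x w := by
  simp only [okPos, Fin.forall_fin_succ, Fin.cons_zero, Fin.cons_succ]

lemma condF_cons_iff {z a : ℤ} {b : ℕ∞} (hb : b ≠ ⊤) {x : Fin m → ℤ} {w : Fin m → ℕ∞} :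
    condF z (Fin.cons a x : Fin (m + 1) → ℤ) (Fin.cons b w) ↔ condF (z + a) x w := by
  simp only [condF, Fin.forall_fin_succ, Fin.cons_zero, Fin.cons_succ, Fin.sum_Iio_succ, hb,
    Fin.succ_lt_succ_iff, Fin.not_lt_zero, IsEmpty.forall_iff, true_and,
    sub_add_eq_sub_sub, neg_add']

end Cons

section HeadTail

variable {m : ℕ}

lemma qnu_tail_qsrc {g : Fgpd (m + 1)} (hg : qsrc g 0 ≠ ⊤) :
    qnu (Fin.tail (qsrc g)) = Fin.tail (qsrc g) := by
  have h := qnu_cons hg (Fin.tail (qsrc g))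
  rw [Fin.cons_self_tail, qnu_qsrc] at h
  simpa using (congrArg Fin.tail h).symm

lemma condF_tail_qsrc {g : Fgpd (m + 1)} (hg : qsrc g 0 ≠ ⊤) :
    condF (qzp g + qxp g 0) (Fin.tail (qxp g)) (Fin.tail (qsrc g)) :=
  (condF_cons_iff hg).1 (by simpa only [Fin.cons_self_tail] using condF_qsrc g)

lemma qxp_zero_add_toNat_qsrc_zero_nonneg {g : Fgpd (m + 1)} (hg : qsrc g 0 ≠ ⊤) :
    0 ≤ qxp g 0 + ((qsrc g 0).toNat : ℤ) :=
  okPos_qsrc g 0 _ (ENat.natCast_toNat hg).symm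

def tailClass (g : Fgpd (m + 1)) (hg : qsrc g 0 ≠ ⊤) : Fgpd m :=
  Fgpd.mk (qzp g + qxp g 0) (Fin.tail (qxp g)) (Fin.tail (qsrc g))
    (fun i => okPos_qsrc g i.succ) (condF_tail_qsrc hg)

def consClass (a : ℤ) (b : ℕ) (hab : 0 ≤ a + b) (c : Fgpd m) : Fgpd (m + 1) :=
  Fgpd.mk (qzp c - a) (Fin.cons a (qxp c)) (Fin.cons (b : ℕ∞) (qsrc c))
    (okPos_cons_iff.2 ⟨fun k hk => by rwa [← Nat.cast_inj.1 hk], okPos_qsrc c⟩)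
    ((condF_cons_iff (ENat.natCast_ne_top b)).2 (by simpa using condF_qsrc c))

@[simp] lemma qzp_tailClass {g : Fgpd (m + 1)} (hg : qsrc g 0 ≠ ⊤) :
    qzp (tailClass g hg) = qzp g + qxp g 0 := rfl

@[simp] lemma qxp_tailClass {g : Fgpd (m + 1)} (hg : qsrc g 0 ≠ ⊤) :
    qxp (tailClass g hg) = Fin.tail (qxp g) := rfl

@[simp] lemma qsrc_tailClass {g : Fgpd (m + 1)} (hg : qsrc g 0 ≠ ⊤) :
    qsrc (tailClass g hg) = Fin.tail (qsrc g) :=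
  qnu_tail_qsrc hg

section consClass

variable {a : ℤ} {b : ℕ} {hab : 0 ≤ a + b} {c : Fgpd m}

@[simp] lemma qzp_consClass : qzp (consClass a b hab c) = qzp c - a := rfl

@[simp] lemma qxp_consClass : qxp (consClass a b hab c) = Fin.cons a (qxp c) := rfl

@[simp] lemma qsrc_consClass : qsrc (consClass a b hab c) = Fin.cons (b : ℕ∞) (qsrc c) := by
  simp only [consClass, Fgpd.qsrc_mk, qnu_cons (ENat.natCast_ne_top b), qnu_qsrc]

end consClass

def headTailEquiv :
    {g : Fgpd (m + 1) // qsrc g 0 ≠ ⊤} ≃ {q : ℤ × ℕ // 0 ≤ q.1 + (q.2 : ℤ)} × Fgpd m where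
  toFun g :=
    (⟨(qxp g.1 0, (qsrc g.1 0).toNat), qxp_zero_add_toNat_qsrc_zero_nonneg g.2⟩, tailClass g.1 g.2)
  invFun p := ⟨consClass p.1.1.1 p.1.1.2 p.1.2 p.2, by simp⟩
  left_inv g := Subtype.ext <| Fgpd.ext (by simp) (by simp)
    (by simp [ENat.natCast_toNat g.2])
  right_inv p := Prod.ext (Subtype.ext (by simp)) (Fgpd.ext (by simp) (by simp) (by simp))

end HeadTail

section Multiplication

variable {m : ℕ}

lemma qsrc_eq_qtgt_iff_headTailEquiv (g h : {g : Fgpd (m + 1) // qsrc g 0 ≠ ⊤}) :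
    qsrc g.1 = qtgt h.1 ↔
      ((headTailEquiv g).1.1.2 : ℤ) = (headTailEquiv h).1.1.1 + (headTailEquiv h).1.1.2 ∧
        qsrc (headTailEquiv g).2 = qtgt (headTailEquiv h).2 := by
  rcases g with ⟨g, hg⟩
  rcases h with ⟨h, hh⟩
  obtain ⟨b, hb⟩ := ENat.ne_top_iff_exists.1 hg
  obtain ⟨c, hc⟩ := ENat.ne_top_iff_exists.1 hh
  have hpos : 0 ≤ qxp h 0 + c := okPos_qsrc h 0 c hc.symm
  rw [← Fin.cons_self_tail (qsrc g), ← Fin.cons_self_tail (qtgt h), Fin.cons_inj, qtgt_eq,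
    qtgt_eq]
  refine and_congr ?_ ?_
  · simp only [headTailEquiv, Equiv.coe_fn_mk, addxw, ← hb, ← hc, ENat.toNat_natCast]
    exact natCast_eq_addZN_iff hpos
  · simp only [headTailEquiv, Equiv.coe_fn_mk, qsrc_tailClass, qxp_tailClass]
    rfl

lemma qIsMul_headTailEquiv {g h : {g : Fgpd (m + 1) // qsrc g 0 ≠ ⊤}} {p : Fgpd (m + 1)}
    (hmul : qIsMul g.1 h.1 p) (hp : qsrc p 0 ≠ ⊤) :
    (headTailEquiv ⟨p, hp⟩).1.1.1 = (headTailEquiv g).1.1.1 + (headTailEquiv h).1.1.1 ∧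
      (headTailEquiv ⟨p, hp⟩).1.1.2 = (headTailEquiv h).1.1.2 ∧
      qIsMul (headTailEquiv g).2 (headTailEquiv h).2 (headTailEquiv ⟨p, hp⟩).2 := by
  obtain ⟨hst, hz, hx, hs⟩ := hmul
  refine ⟨hx 0, by simp [headTailEquiv, hs], ((qsrc_eq_qtgt_iff_headTailEquiv g h).1 hst).2,
    ?_, fun i => hx i.succ, ?_⟩
  · simp only [headTailEquiv, Equiv.coe_fn_mk, qzp_tailClass, hz, hx 0]
    ring
  · simp [headTailEquiv, hs]

end Multiplication

/-- For `n ≥ 2`, the map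
`[(z, x, w)] ↦ ((x₁, w₁), [(z + x₁, (x₂, …, x_n), (w₂, …, w_n))])` is a well-defined
bijection from `{g ∈ F_n : w₁ ≠ ∞}` onto `{(a, b) ∈ ℤ × ℕ : a + b ≥ 0} × F_{n-1}`
converting the product of `F_n` into the componentwise product. -/
theorem stmt12 (n : ℕ) (hn : 2 ≤ n) :
    ∃ φ : {g : Fgpd n // qsrc g ⟨0, by omega⟩ ≠ ⊤} →
        {q : ℤ × ℕ // 0 ≤ q.1 + (q.2 : ℤ)} × Fgpd (n - 1),
      (∀ g : {g : Fgpd n // qsrc g ⟨0, by omega⟩ ≠ ⊤},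
        (φ g).1.val.1 = qxp g.val ⟨0, by omega⟩ ∧
        ((φ g).1.val.2 : ℕ∞) = qsrc g.val ⟨0, by omega⟩ ∧
        qzp (φ g).2 = qzp g.val + qxp g.val ⟨0, by omega⟩ ∧
        (∀ i : Fin (n - 1), qxp (φ g).2 i = qxp g.val ⟨(i : ℕ) + 1, by omega⟩) ∧
        (∀ i : Fin (n - 1), qsrc (φ g).2 i = qsrc g.val ⟨(i : ℕ) + 1, by omega⟩)) ∧
      Function.Bijective φ ∧
      (∀ g h : {g : Fgpd n // qsrc g ⟨0, by omega⟩ ≠ ⊤},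
        qsrc g.val = qtgt h.val ↔
          (((φ g).1.val.2 : ℤ) = (φ h).1.val.1 + ((φ h).1.val.2 : ℤ) ∧
            qsrc (φ g).2 = qtgt (φ h).2)) ∧
      (∀ (g h : {g : Fgpd n // qsrc g ⟨0, by omega⟩ ≠ ⊤}) (p : Fgpd n),
        qIsMul g.val h.val p → ∀ hps : qsrc p ⟨0, by omega⟩ ≠ ⊤,
          (φ ⟨p, hps⟩).1.val.1 = (φ g).1.val.1 + (φ h).1.val.1 ∧
          (φ ⟨p, hps⟩).1.val.2 = (φ h).1.val.2 ∧
          qIsMul (φ g).2 (φ h).2 (φ ⟨p, hps⟩).2) := by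
  obtain ⟨m, rfl⟩ : ∃ m, n = m + 1 := ⟨n - 1, by omega⟩
  refine ⟨headTailEquiv, fun g => ⟨rfl, ENat.natCast_toNat g.2, rfl, fun _ => rfl,
    fun i => congrFun (qsrc_tailClass g.2) i⟩, headTailEquiv.bijective,
    qsrc_eq_qtgt_iff_headTailEquiv, fun _ _ _ hmul hp => qIsMul_headTailEquiv hmul hp⟩
end

section
/- For all integers k > 0, 0 ≤ j ≤ n − 1, and 0 ≤ l ≤ k − 1, the map [(k, x, w)] ↦ [(k − l, (x_1, …, x_j, x_{j+1} + l, x_{j+2}, …, x_n), (0, …, 0, w_{j+2}, …, w_n))] (with j + 1 zeros at the start of the last tuple) is a well-defined target-preserving bijection from {g ∈ (F_n)_{k,j} : w_{j+1} = l} onto (F_n)_{k−l, j+1}. -/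
namespace Stmt15

variable {n : ℕ}

lemma qzp_mk (a : FTil n) : qzp (⟦a⟧ : Fgpd n) = a.val.1 := rfl
lemma qxp_mk (a : FTil n) : qxp (⟦a⟧ : Fgpd n) = a.val.2.1 := rfl
lemma qsrc_mk (a : FTil n) : qsrc (⟦a⟧ : Fgpd n) = qnu a.val.2.2 := rfl

lemma qnu_eq_top_iff (w : Fin n → ℕ∞) (i : Fin n) :
    qnu w i = ⊤ ↔ ∃ j, j ≤ i ∧ w j = ⊤ := by
  unfold qnu
  by_cases h : ∃ j, j ≤ i ∧ w j = ⊤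
  · simp [h]
  · simp only [if_neg h, h, iff_false]
    intro hwi
    exact h ⟨i, le_refl i, hwi⟩

lemma qnu_eq_self (w : Fin n → ℕ∞) (i : Fin n) (h : ∀ p, p ≤ i → w p ≠ ⊤) :
    qnu w i = w i := by
  unfold qnu
  rw [if_neg]
  rintro ⟨p, hp, hpt⟩
  exact h p hp hpt

lemma no_top_of_qnu_ne_top (w : Fin n → ℕ∞) (i : Fin n) (h : qnu w i ≠ ⊤) :
    ∀ p, p ≤ i → w p ≠ ⊤ := by
  intro p hp hpt
  exact h ((qnu_eq_top_iff w i).mpr ⟨p, hp, hpt⟩)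

lemma addxw_top_iff (x : Fin n → ℤ) (w : Fin n → ℕ∞) (i : Fin n) :
    addxw x w i = ⊤ ↔ w i = ⊤ := by
  unfold addxw addZN
  split
  · simp [*]
  · simp [*]

lemma qnu_addxw_congr (x : Fin n → ℤ) (w w' : Fin n → ℕ∞) (h : qnu w = qnu w') :
    qnu (addxw x w) = qnu (addxw x w') := by
  funext i
  have key : ∀ v : Fin n → ℕ∞, qnu (addxw x v) i = ⊤ ↔ qnu v i = ⊤ := by
    intro v
    rw [qnu_eq_top_iff, qnu_eq_top_iff]
    exact exists_congr fun p => and_congr_right fun _ => by rw [addxw_top_iff]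
  by_cases ht : qnu w i = ⊤
  · rw [(key w).mpr ht, (key w').mpr (h ▸ ht)]
  · have ht' : qnu w' i ≠ ⊤ := h ▸ ht
    have h1 := no_top_of_qnu_ne_top w i ht
    have h1' := no_top_of_qnu_ne_top w' i ht'
    have h2 : ∀ p, p ≤ i → addxw x w p ≠ ⊤ := fun p hp hpt =>
      h1 p hp ((addxw_top_iff x w p).mp hpt)
    have h2' : ∀ p, p ≤ i → addxw x w' p ≠ ⊤ := fun p hp hpt =>
      h1' p hp ((addxw_top_iff x w' p).mp hpt)
    rw [qnu_eq_self _ _ h2, qnu_eq_self _ _ h2']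
    have hw : w i = w' i := by
      have e1 := qnu_eq_self w i h1
      have e2 := qnu_eq_self w' i h1'
      rw [← e1, ← e2, h]
    unfold addxw
    rw [hw]

lemma qtgt_mk (a : FTil n) :
    qtgt (⟦a⟧ : Fgpd n) = qnu (addxw a.val.2.1 a.val.2.2) := by
  have h : FRel ((⟦a⟧ : Fgpd n).out) a := Quotient.mk_out a
  unfold qtgt
  rw [h.2.1]
  exact qnu_addxw_congr _ _ _ h.2.2

lemma class_eq (g h : Fgpd n) (hz : qzp g = qzp h) (hx : qxp g = qxp h)
    (hs : qsrc g = qsrc h) : g = h := by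
  induction g using Quotient.inductionOn with
  | h a =>
  induction h using Quotient.inductionOn with
  | h b =>
  exact Quotient.sound ⟨hz, hx, hs⟩

lemma qnu_congr_above {j : ℕ} (w w' : Fin n → ℕ∞)
    (h1 : ∀ p : Fin n, (p : ℕ) ≤ j → w p ≠ ⊤) (h1' : ∀ p : Fin n, (p : ℕ) ≤ j → w' p ≠ ⊤)
    (h2 : ∀ p : Fin n, j < (p : ℕ) → w p = w' p) (i : Fin n) (hi : j < (i : ℕ)) :
    qnu w i = qnu w' i := by
  have hiff : (∃ p, p ≤ i ∧ w p = ⊤) ↔ (∃ p, p ≤ i ∧ w' p = ⊤) := by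
    constructor
    · rintro ⟨p, hp, hpt⟩
      have hpj : j < (p : ℕ) := by
        by_contra hc
        exact h1 p (Nat.le_of_not_lt hc) hpt
      exact ⟨p, hp, (h2 p hpj) ▸ hpt⟩
    · rintro ⟨p, hp, hpt⟩
      have hpj : j < (p : ℕ) := by
        by_contra hc
        exact h1' p (Nat.le_of_not_lt hc) hpt
      exact ⟨p, hp, (h2 p hpj).symm ▸ hpt⟩
  unfold qnu
  by_cases hc : ∃ p, p ≤ i ∧ w p = ⊤
  · rw [if_pos hc, if_pos (hiff.mp hc)]
  · rw [if_neg hc, if_neg (fun h' => hc (hiff.mpr h')), h2 i hi]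


/-- Shifted `x`-vector. -/
def txf (j : ℕ) (c : ℤ) (a : FTil n) : Fin n → ℤ :=
  fun i => if (i : ℕ) = j then a.val.2.1 i + c else a.val.2.1 i

/-- Truncated `w`-vector. -/
def twf (j : ℕ) (a : FTil n) : Fin n → ℕ∞ :=
  fun i => if (i : ℕ) ≤ j then 0 else a.val.2.2 i

lemma sum_shift {j : ℕ} (hjn : j < n) (f : Fin n → ℤ) (c : ℤ) (i : Fin n)
    (hij : j < (i : ℕ)) :
    ∑ p ∈ Finset.Iio i, (if (p : ℕ) = j then f p + c else f p)
      = (∑ p ∈ Finset.Iio i, f p) + c := by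
  have hrw : ∀ p : Fin n, (if (p : ℕ) = j then f p + c else f p)
      = f p + (if p = (⟨j, hjn⟩ : Fin n) then c else 0) := by
    intro p
    by_cases hp : (p : ℕ) = j
    · rw [if_pos hp, if_pos (Fin.ext hp)]
    · rw [if_neg hp, if_neg (fun h => hp (by rw [h])), add_zero]
  simp_rw [hrw]
  rw [Finset.sum_add_distrib, Finset.sum_ite_eq', if_pos]
  rw [Finset.mem_Iio]
  exact Fin.lt_def.mpr hij

lemma rep_facts {j l : ℕ} (hjn : j < n) (w : Fin n → ℕ∞)
    (h0 : ∀ i : Fin n, (i : ℕ) < j → qnu w i = 0)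
    (hl : qnu w ⟨j, hjn⟩ = (l : ℕ∞)) :
    (∀ p : Fin n, (p : ℕ) ≤ j → w p ≠ ⊤) ∧
    (∀ p : Fin n, (p : ℕ) < j → w p = 0) ∧
    w ⟨j, hjn⟩ = (l : ℕ∞) := by
  have hnt : ∀ p : Fin n, (p : ℕ) ≤ j → w p ≠ ⊤ := by
    intro p hp
    refine no_top_of_qnu_ne_top w ⟨j, hjn⟩ ?_ p (Fin.le_def.mpr hp)
    rw [hl]; simp
  refine ⟨hnt, fun p hp => ?_, ?_⟩
  · have := qnu_eq_self w p (fun q hq =>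
      hnt q (le_trans (Fin.le_def.mp hq) (le_of_lt hp)))
    rw [← this, h0 p hp]
  · have := qnu_eq_self w ⟨j, hjn⟩ (fun q hq => hnt q (Fin.le_def.mp hq))
    rw [← this, hl]

lemma valid_T {j l : ℕ} (hjn : j < n) (a : FTil n)
    (h0 : ∀ i : Fin n, (i : ℕ) < j → qnu a.val.2.2 i = 0)
    (hl : qnu a.val.2.2 ⟨j, hjn⟩ = (l : ℕ∞)) :
    okPos (txf j l a) (twf j a) ∧ condF (a.val.1 - l) (txf j l a) (twf j a) := by
  obtain ⟨hnt, hw0, hwl⟩ := rep_facts hjn a.val.2.2 h0 hl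
  constructor
  · intro i m him
    unfold twf at him
    by_cases hi : (i : ℕ) ≤ j
    · rw [if_pos hi] at him
      have hm : m = 0 := Nat.cast_eq_zero.mp him.symm
      subst hm
      by_cases hij : (i : ℕ) = j
      · have hieq : i = (⟨j, hjn⟩ : Fin n) := Fin.ext hij
        have := a.prop.1 i l (hieq ▸ hwl)
        unfold txf
        rw [if_pos hij]
        push_cast
        linarith
      · have hilt : (i : ℕ) < j := lt_of_le_of_ne hi hij
        have := a.prop.1 i 0 (by rw [hw0 i hilt]; simp)
        unfold txf
        rw [if_neg hij]
        push_cast at this ⊢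
        linarith
    · rw [if_neg hi] at him
      have := a.prop.1 i m him
      unfold txf
      rw [if_neg (fun h => hi (le_of_eq h))]
      exact this
  · intro i hit
    unfold twf at hit
    by_cases hi : (i : ℕ) ≤ j
    · rw [if_pos hi] at hit; exact absurd hit (by simp)
    · rw [if_neg hi] at hit
      have hij : j < (i : ℕ) := Nat.lt_of_not_le hi
      obtain ⟨hx1, hx2⟩ := a.prop.2 i hit
      constructor
      · unfold txf
        rw [if_neg (fun h => hi (le_of_eq h))]
        rw [sum_shift hjn _ _ i hij, hx1]
        ring
      · intro p hip
        unfold txf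
        rw [if_neg (fun h => hi (le_of_eq (by
          have : (i : ℕ) < (p : ℕ) := Fin.lt_def.mp hip
          omega)))]
        · exact hx2 p hip

open Classical in
/-- The map of Statement 15. -/
noncomputable def phi (j l : ℕ) (g : Fgpd n) : Fgpd n :=
  if h : okPos (txf j l g.out) (twf j g.out) ∧
      condF (g.out.val.1 - l) (txf j l g.out) (twf j g.out)
  then ⟦(⟨(g.out.val.1 - (l : ℤ), txf j l g.out, twf j g.out), h⟩ : FTil n)⟧
  else g

lemma phi_spec {j l : ℕ} (hjn : j < n) (g : Fgpd n)
    (h0 : ∀ i : Fin n, (i : ℕ) < j → qsrc g i = 0)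
    (hl : qsrc g ⟨j, hjn⟩ = (l : ℕ∞)) :
    qzp (phi j l g) = qzp g - l ∧
    (∀ i : Fin n, qxp (phi j l g) i = if (i : ℕ) = j then qxp g i + l else qxp g i) ∧
    (∀ i : Fin n, qsrc (phi j l g) i = if (i : ℕ) ≤ j then 0 else qsrc g i) ∧
    qtgt (phi j l g) = qtgt g := by
  have hout : (⟦g.out⟧ : Fgpd n) = g := Quotient.out_eq g
  have hsrc : qsrc g = qnu g.out.val.2.2 := by
    conv_lhs => rw [← hout]
    rfl
  have hzp : qzp g = g.out.val.1 := by
    conv_lhs => rw [← hout]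
    rfl
  have hxp : qxp g = g.out.val.2.1 := by
    conv_lhs => rw [← hout]
    rfl
  have h0' : ∀ i : Fin n, (i : ℕ) < j → qnu g.out.val.2.2 i = 0 := by
    intro i hi; rw [← hsrc]; exact h0 i hi
  have hl' : qnu g.out.val.2.2 ⟨j, hjn⟩ = (l : ℕ∞) := by rw [← hsrc]; exact hl
  obtain ⟨hnt, hw0, hwl⟩ := rep_facts hjn g.out.val.2.2 h0' hl'
  have hP := valid_T hjn g.out h0' hl'
  have hphi : phi j l g = ⟦(⟨(g.out.val.1 - (l : ℤ), txf j l g.out, twf j g.out),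
      hP⟩ : FTil n)⟧ := by
    unfold phi
    rw [dif_pos hP]
  have htwf_nt : ∀ p : Fin n, (p : ℕ) ≤ j → twf j g.out p ≠ ⊤ := by
    intro p hp
    unfold twf
    rw [if_pos hp]
    simp
  refine ⟨?_, ?_, ?_, ?_⟩
  · rw [hphi, qzp_mk, hzp]
  · intro i
    rw [hphi, qxp_mk, hxp]
    rfl
  · intro i
    rw [hphi, qsrc_mk]
    by_cases hi : (i : ℕ) ≤ j
    · rw [if_pos hi]
      have := qnu_eq_self (twf j g.out) i (fun p hp =>
        htwf_nt p (le_trans (Fin.le_def.mp hp) hi))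
      rw [this]
      unfold twf
      rw [if_pos hi]
    · rw [if_neg hi, hsrc]
      exact qnu_congr_above (twf j g.out) g.out.val.2.2 htwf_nt hnt
        (fun p hp => by unfold twf; rw [if_neg (by omega)]) i (by omega)
  · have haddeq : addxw (txf j (l : ℤ) g.out) (twf j g.out)
        = addxw g.out.val.2.1 g.out.val.2.2 := by
      funext i
      unfold addxw txf twf
      rcases lt_trichotomy (i : ℕ) j with hlt | heq | hgt
      · rw [if_neg (by omega), if_pos (le_of_lt hlt), hw0 i hlt]
      · have hieq : i = (⟨j, hjn⟩ : Fin n) := Fin.ext heq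
        rw [if_pos heq, if_pos (le_of_eq heq), hieq, hwl]
        unfold addZN
        simp
      · rw [if_neg (by omega), if_neg (by omega)]
    rw [hphi, qtgt_mk]
    show qnu (addxw (txf j (l : ℤ) g.out) (twf j g.out)) = qtgt g
    conv_rhs => rw [← hout, qtgt_mk]
    rw [haddeq]

end Stmt15

/-- For `k > 0`, `0 ≤ j ≤ n - 1` and `0 ≤ l ≤ k - 1`, the map
`[(k, x, w)] ↦ [(k - l, (x₁, …, x_j, x_{j+1} + l, x_{j+2}, …), (0, …, 0, w_{j+2}, …))]`
(with `j + 1` zeros at the start of the last tuple) is a well-defined target-preserving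
bijection from `{g ∈ (F_n)_{k,j} : w_{j+1} = l}` onto `(F_n)_{k-l, j+1}`. -/
theorem stmt15 (n : ℕ) (hn : 1 ≤ n) (k : ℕ) (hk : 0 < k) (j : ℕ) (hj : j ≤ n - 1)
    (l : ℕ) (hl : l ≤ k - 1) :
    ∃ φ : Fgpd n → Fgpd n,
      (∀ g : Fgpd n, g ∈ Fkj n k j → qsrc g ⟨j, by omega⟩ = (l : ℕ∞) →
        qzp (φ g) = (k : ℤ) - l ∧
        (∀ i : Fin n, qxp (φ g) i = if (i : ℕ) = j then qxp g i + l else qxp g i) ∧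
        (∀ i : Fin n, qsrc (φ g) i = if (i : ℕ) ≤ j then 0 else qsrc g i) ∧
        qtgt (φ g) = qtgt g) ∧
      Set.BijOn φ {g : Fgpd n | g ∈ Fkj n k j ∧ qsrc g ⟨j, by omega⟩ = (l : ℕ∞)}
        (Fkj n ((k : ℤ) - l) (j + 1)) := by
  have hjn : j < n := by omega
  refine ⟨Stmt15.phi j l, ?_, ?_, ?_, ?_⟩
  · -- the required properties
    intro g hg hgl
    obtain ⟨hgz, h0⟩ := hg
    obtain ⟨hs1, hs2, hs3, hs4⟩ := Stmt15.phi_spec hjn g h0 hgl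
    exact ⟨by rw [hs1, hgz], hs2, hs3, hs4⟩
  · -- MapsTo
    rintro g ⟨⟨hgz, h0⟩, hgl⟩
    obtain ⟨hs1, hs2, hs3, hs4⟩ := Stmt15.phi_spec hjn g h0 hgl
    refine ⟨by rw [hs1, hgz], fun i hi => ?_⟩
    rw [hs3 i, if_pos (by omega)]
  · -- InjOn
    rintro g ⟨⟨hgz, h0⟩, hgl⟩ g' ⟨⟨hgz', h0'⟩, hgl'⟩ heq
    obtain ⟨hs1, hs2, hs3, hs4⟩ := Stmt15.phi_spec hjn g h0 hgl
    obtain ⟨ht1, ht2, ht3, ht4⟩ := Stmt15.phi_spec hjn g' h0' hgl'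
    apply Stmt15.class_eq
    · rw [hgz, hgz']
    · funext i
      have hcomp := hs2 i
      rw [heq, ht2 i] at hcomp
      by_cases hij : (i : ℕ) = j
      · rw [if_pos hij, if_pos hij] at hcomp
        linarith
      · rw [if_neg hij, if_neg hij] at hcomp
        exact hcomp.symm
    · funext i
      rcases lt_trichotomy (i : ℕ) j with hlt | heqj | hgt
      · rw [h0 i hlt, h0' i hlt]
      · have hieq : i = (⟨j, hjn⟩ : Fin n) := Fin.ext heqj
        rw [hieq, hgl, hgl']
      · have e1 := hs3 i
        rw [if_neg (by omega)] at e1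
        have e2 := ht3 i
        rw [if_neg (by omega)] at e2
        rw [← e1, ← e2, heq]
  · -- SurjOn
    rintro h ⟨hhz, h0⟩
    set b := h.out with hbdef
    have hout : (⟦b⟧ : Fgpd n) = h := Quotient.out_eq h
    have hsrcb : qsrc h = qnu b.val.2.2 := by
      conv_lhs => rw [← hout]
      rfl
    have hxh : qxp h = b.val.2.1 := by
      conv_lhs => rw [← hout]
      rfl
    have hzb : b.val.1 = (k : ℤ) - l := by
      rw [← hhz]
      conv_rhs => rw [← hout]
      rfl
    have hq0 : ∀ i : Fin n, (i : ℕ) ≤ j → qnu b.val.2.2 i = 0 := fun i hi => by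
      rw [← hsrcb]
      exact h0 i (by omega)
    have hnt : ∀ p : Fin n, (p : ℕ) ≤ j → b.val.2.2 p ≠ ⊤ := by
      intro p hp
      exact Stmt15.no_top_of_qnu_ne_top _ ⟨j, hjn⟩
        (by rw [hq0 ⟨j, hjn⟩ le_rfl]; simp) p (Fin.le_def.mpr hp)
    have hw0 : ∀ p : Fin n, (p : ℕ) ≤ j → b.val.2.2 p = 0 := by
      intro p hp
      have := Stmt15.qnu_eq_self b.val.2.2 p (fun q hq =>
        hnt q (le_trans (Fin.le_def.mp hq) hp))
      rw [← this, hq0 p hp]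
    set cx : Fin n → ℤ :=
      fun i => if (i : ℕ) = j then b.val.2.1 i + (-(l : ℤ)) else b.val.2.1 i with hcx
    set cw : Fin n → ℕ∞ :=
      fun i => if (i : ℕ) < j then 0 else if (i : ℕ) = j then (l : ℕ∞) else b.val.2.2 i
      with hcw
    have hok : okPos cx cw := by
      intro i m him
      simp only [hcw] at him
      rcases lt_trichotomy (i : ℕ) j with hlt | heqj | hgt
      · rw [if_pos hlt] at him
        have hm : m = 0 := Nat.cast_eq_zero.mp him.symm
        subst hm
        have := b.prop.1 i 0 (by rw [hw0 i hlt.le]; simp)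
        simp only [hcx, if_neg (by omega : ¬(i : ℕ) = j)]
        push_cast at this ⊢
        linarith
      · rw [if_neg (by omega), if_pos heqj] at him
        have hm : m = l := Nat.cast_inj.mp him.symm
        subst hm
        have := b.prop.1 i 0 (by rw [hw0 i heqj.le]; simp)
        simp only [hcx, if_pos heqj]
        push_cast at this ⊢
        linarith
      · rw [if_neg (by omega), if_neg (by omega)] at him
        have := b.prop.1 i m him
        simp only [hcx, if_neg (by omega : ¬(i : ℕ) = j)]
        exact this
    have hcond : condF (k : ℤ) cx cw := by
      intro i hit
      simp only [hcw] at hit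
      have hgt : j < (i : ℕ) := by
        by_contra hc
        rcases Nat.lt_or_ge (i : ℕ) j with h1 | h2
        · rw [if_pos h1] at hit
          simp at hit
        · have hieq : (i : ℕ) = j := by omega
          rw [if_neg (by omega), if_pos hieq] at hit
          simp at hit
      rw [if_neg (by omega), if_neg (by omega)] at hit
      obtain ⟨hx1, hx2⟩ := b.prop.2 i hit
      constructor
      · simp only [hcx]
        rw [if_neg (by omega), Stmt15.sum_shift hjn _ _ i hgt, hx1, hzb]
        ring
      · intro p hip
        have hiplt : (i : ℕ) < (p : ℕ) := Fin.lt_def.mp hip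
        simp only [hcx]
        rw [if_neg (by omega)]
        exact hx2 p hip
    set c : FTil n := ⟨((k : ℤ), cx, cw), hok, hcond⟩ with hcdef
    set g : Fgpd n := ⟦c⟧ with hgdef
    have hgz : qzp g = (k : ℤ) := rfl
    have hgx : qxp g = cx := rfl
    have hgsrc : qsrc g = qnu cw := rfl
    have hcwnt : ∀ p : Fin n, (p : ℕ) ≤ j → cw p ≠ ⊤ := by
      intro p hp
      simp only [hcw]
      by_cases h1 : (p : ℕ) < j
      · simp [h1]
      · have hpe : (p : ℕ) = j := by omega
        simp [h1, hpe]
    have hg0 : ∀ i : Fin n, (i : ℕ) < j → qsrc g i = 0 := by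
      intro i hi
      rw [hgsrc, Stmt15.qnu_eq_self cw i (fun q hq =>
        hcwnt q (by have := Fin.le_def.mp hq; omega))]
      simp only [hcw]
      rw [if_pos hi]
    have hgl2 : qsrc g ⟨j, hjn⟩ = (l : ℕ∞) := by
      rw [hgsrc, Stmt15.qnu_eq_self cw ⟨j, hjn⟩ (fun q hq => hcwnt q (Fin.le_def.mp hq))]
      simp only [hcw]
      rw [if_neg (lt_irrefl j)]
      simp
    obtain ⟨hs1, hs2, hs3, hs4⟩ := Stmt15.phi_spec hjn g hg0 hgl2
    refine ⟨g, ⟨⟨hgz, hg0⟩, hgl2⟩, ?_⟩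
    apply Stmt15.class_eq
    · rw [hs1, hgz, hhz]
    · funext i
      rw [hs2 i, hxh, hgx]
      by_cases hij : (i : ℕ) = j
      · rw [if_pos hij]
        simp only [hcx, if_pos hij]
        ring
      · rw [if_neg hij]
        simp only [hcx, if_neg hij]
    · funext i
      rw [hs3 i, hsrcb]
      by_cases hij : (i : ℕ) ≤ j
      · rw [if_pos hij, hq0 i hij]
      · rw [if_neg hij, hgsrc]
        exact Stmt15.qnu_congr_above cw b.val.2.2 hcwnt hnt
          (fun p hp => by
            simp only [hcw]
            rw [if_neg (by omega), if_neg (by omega)]) i (by omega)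
end

section
/- For every integer k > 0 and every 1 ≤ l ≤ n, the set (F_n)_k can be written as a disjoint union of pairwise disjoint subsets as follows: for each 0 ≤ j ≤ l − 1, exactly binom(k + j − 1, j) of these subsets each admit a target-preserving bijection onto (F_n)_{0,j}, and for each 1 ≤ m ≤ k, exactly binom(k − m + l − 1, l − 1) of these subsets each admit a target-preserving bijection onto (F_n)_{m,l}. -/
/-- Index set for the decomposition in Statement 18: triples `(0, j, c)` with `j < l`,
`c < binom(k + j - 1, j)`, and `(1, m, c)` with `1 ≤ m ≤ k`,
`c < binom(k - m + l - 1, l - 1)`. -/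
def Valid18 (k l : ℕ) (q : ℕ × ℕ × ℕ) : Prop :=
  (q.1 = 0 ∧ q.2.1 < l ∧ q.2.2 < Nat.choose (k + q.2.1 - 1) q.2.1) ∨
  (q.1 = 1 ∧ 1 ≤ q.2.1 ∧ q.2.1 ≤ k ∧ q.2.2 < Nat.choose (k - q.2.1 + l - 1) (l - 1))

namespace S18

variable {n : ℕ}

lemma qnu_top_iff {w : Fin n → ℕ∞} {i : Fin n} :
    qnu w i = ⊤ ↔ ∃ j, j ≤ i ∧ w j = ⊤ := by
  unfold qnu
  split
  · next h => exact ⟨fun _ => h, fun _ => rfl⟩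
  · next h => exact ⟨fun hw => absurd ⟨i, le_refl i, hw⟩ h, fun hj => absurd hj h⟩

lemma qnu_eq_of_not_top {w : Fin n → ℕ∞} {i : Fin n}
    (h : ¬ ∃ j, j ≤ i ∧ w j = ⊤) : qnu w i = w i := if_neg h

def NormT (t : Fin n → ℕ∞) : Prop := ∀ i j : Fin n, i ≤ j → t i = ⊤ → t j = ⊤

lemma normT_qnu (w : Fin n → ℕ∞) : NormT (qnu w) := by
  intro i j hij hi
  rcases qnu_top_iff.mp hi with ⟨q, hq, hw⟩
  exact qnu_top_iff.mpr ⟨q, hq.trans hij, hw⟩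

lemma qnu_eq_self {t : Fin n → ℕ∞} (ht : NormT t) : qnu t = t := by
  funext i
  unfold qnu
  split
  · next h => rcases h with ⟨j, hj, hw⟩; exact (ht j i hj hw).symm
  · rfl

lemma addZN_top_iff {a : ℤ} {b : ℕ∞} : addZN a b = ⊤ ↔ b = ⊤ := by
  unfold addZN
  split
  · next h => simp [h]
  · next h => simp [h]

lemma addZN_coe (a : ℤ) (m : ℕ) : addZN a (m : ℕ∞) = (((a + m).toNat : ℕ) : ℕ∞) := by
  unfold addZN
  rw [if_neg (by simp)]
  simp

lemma addxw_apply (x : Fin n → ℤ) (w : Fin n → ℕ∞) (i : Fin n) :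
    addxw x w i = addZN (x i) (w i) := rfl

lemma qnu_addxw_qnu (x : Fin n → ℤ) (w : Fin n → ℕ∞) :
    qnu (addxw x (qnu w)) = qnu (addxw x w) := by
  funext i
  by_cases H : ∃ j, j ≤ i ∧ w j = ⊤
  · rcases H with ⟨j, hj, hw⟩
    rw [qnu_top_iff.mpr ⟨j, hj, addZN_top_iff.mpr (qnu_top_iff.mpr ⟨j, le_refl j, hw⟩)⟩,
        qnu_top_iff.mpr ⟨j, hj, addZN_top_iff.mpr hw⟩]
  · have h1 : ¬ ∃ j, j ≤ i ∧ addxw x (qnu w) j = ⊤ := by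
      rintro ⟨j, hj, htop⟩
      rw [addxw_apply] at htop
      rcases qnu_top_iff.mp (addZN_top_iff.mp htop) with ⟨q, hq, hw⟩
      exact H ⟨q, hq.trans hj, hw⟩
    have h2 : ¬ ∃ j, j ≤ i ∧ addxw x w j = ⊤ := by
      rintro ⟨j, hj, htop⟩
      rw [addxw_apply] at htop
      exact H ⟨j, hj, addZN_top_iff.mp htop⟩
    rw [qnu_eq_of_not_top h1, qnu_eq_of_not_top h2, addxw_apply, addxw_apply,
      qnu_eq_of_not_top H]

lemma qzp_mk (a : FTil n) : qzp (⟦a⟧ : Fgpd n) = a.val.1 := rfl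
lemma qxp_mk (a : FTil n) : qxp (⟦a⟧ : Fgpd n) = a.val.2.1 := rfl
lemma qsrc_mk (a : FTil n) : qsrc (⟦a⟧ : Fgpd n) = qnu a.val.2.2 := rfl

lemma qxp_out (g : Fgpd n) : qxp g = g.out.val.2.1 := by
  conv_lhs => rw [← Quotient.out_eq g]
  rfl

lemma qsrc_out (g : Fgpd n) : qsrc g = qnu g.out.val.2.2 := by
  conv_lhs => rw [← Quotient.out_eq g]
  rfl

lemma qtgt_eq (g : Fgpd n) : qtgt g = qnu (addxw (qxp g) (qsrc g)) := by
  rw [qxp_out, qsrc_out, qnu_addxw_qnu]; rfl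

lemma Fgpd.ext {g g' : Fgpd n} (h1 : qzp g = qzp g') (h2 : qxp g = qxp g')
    (h3 : qsrc g = qsrc g') : g = g' := by
  induction g using Quotient.inductionOn with | _ a =>
  induction g' using Quotient.inductionOn with | _ b =>
  exact Quotient.sound ⟨h1, h2, h3⟩

lemma normT_qsrc (g : Fgpd n) : NormT (qsrc g) := by rw [qsrc_out]; exact normT_qnu _
lemma normT_qtgt (g : Fgpd n) : NormT (qtgt g) := by rw [qtgt_eq]; exact normT_qnu _

lemma qtgt_top_iff (g : Fgpd n) (i : Fin n) : qtgt g i = ⊤ ↔ qsrc g i = ⊤ := by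
  rw [qtgt_eq]
  constructor
  · intro h
    rcases qnu_top_iff.mp h with ⟨j, hj, hw⟩
    rw [addxw_apply] at hw
    exact normT_qsrc g j i hj (addZN_top_iff.mp hw)
  · intro h
    exact qnu_top_iff.mpr ⟨i, le_refl i, addZN_top_iff.mpr h⟩

lemma okPos_src (g : Fgpd n) : okPos (qxp g) (qsrc g) := by
  induction g using Quotient.inductionOn with | _ a =>
  intro i m hm
  rw [qsrc_mk] at hm
  unfold qnu at hm
  split at hm
  · exact absurd hm (by simp)
  · exact a.property.1 i m hm

lemma sum_Iio_eq_of_zero {i p : Fin n} (hpi : p < i) (f : Fin n → ℤ)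
    (h0 : ∀ q, p < q → f q = 0) :
    ∑ j ∈ Finset.Iio i, f j = (∑ j ∈ Finset.Iio p, f j) + f p := by
  have h1 : ∑ j ∈ Finset.Iic p, f j = ∑ j ∈ Finset.Iio i, f j := by
    apply Finset.sum_subset
    · intro q hq
      exact Finset.mem_Iio.mpr (lt_of_le_of_lt (Finset.mem_Iic.mp hq) hpi)
    · intro q _ hq2
      exact h0 q (by simpa using hq2)
  rw [← h1, ← Finset.Iio_insert p, Finset.sum_insert (by simp)]
  ring

lemma condF_src (g : Fgpd n) : condF (qzp g) (qxp g) (qsrc g) := by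
  intro i hi
  induction g using Quotient.inductionOn with | _ a =>
  rw [qsrc_mk] at hi
  simp only [qzp_mk, qxp_mk]
  rcases qnu_top_iff.mp hi with ⟨p, hpi, hp⟩
  obtain ⟨h1, h2⟩ := a.property.2 p hp
  rcases eq_or_lt_of_le hpi with rfl | hlt
  · exact ⟨h1, h2⟩
  · constructor
    · rw [h2 i hlt, sum_Iio_eq_of_zero hlt _ (fun q hq => h2 q hq), h1]
      ring
    · exact fun j hj => h2 j (lt_trans hlt hj)

end S18

namespace S18

variable {n : ℕ}

def mkx (z : ℤ) (t : Fin n → ℕ∞) (u : Fin n → ℕ) : Fin n → ℤ := fun i =>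
  if t i = ⊤ then
    (if ∀ j, j < i → t j ≠ ⊤ then
      -z - ∑ j ∈ Finset.Iio i, (((t j).toNat : ℤ) - (u j : ℤ)) else 0)
  else ((t i).toNat : ℤ) - (u i : ℤ)

def mks (t : Fin n → ℕ∞) (u : Fin n → ℕ) : Fin n → ℕ∞ := fun i =>
  if t i = ⊤ then ⊤ else (u i : ℕ∞)

lemma mks_top_iff {t : Fin n → ℕ∞} {u : Fin n → ℕ} {i : Fin n} :
    mks t u i = ⊤ ↔ t i = ⊤ := by
  unfold mks; split <;> simp_all

lemma okPos_mk (z : ℤ) (t : Fin n → ℕ∞) (u : Fin n → ℕ) :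
    okPos (mkx z t u) (mks t u) := by
  intro i m hm
  unfold mks at hm
  split at hm
  · exact absurd hm (by simp)
  · next h =>
    have hum : u i = m := by exact_mod_cast hm
    unfold mkx
    rw [if_neg h]
    omega

lemma condF_mk (z : ℤ) {t : Fin n → ℕ∞} (u : Fin n → ℕ) (ht : NormT t) :
    condF z (mkx z t u) (mks t u) := by
  intro i hi
  have hti : t i = ⊤ := mks_top_iff.mp hi
  constructor
  · by_cases hf : ∀ j, j < i → t j ≠ ⊤
    · show mkx z t u i = _
      unfold mkx
      rw [if_pos hti, if_pos hf]
      congr 1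
      apply Finset.sum_congr rfl
      intro j hj
      have htj : t j ≠ ⊤ := hf j (Finset.mem_Iio.mp hj)
      rw [if_neg htj]
    · push_neg at hf
      obtain ⟨j1, hj1, htj1⟩ := hf
      classical
      have hFne : (Finset.univ.filter (fun q : Fin n => t q = ⊤)).Nonempty :=
        ⟨j1, by simp [htj1]⟩
      set p := (Finset.univ.filter (fun q : Fin n => t q = ⊤)).min' hFne with hpdef
      have hp : t p = ⊤ := by
        have := (Finset.univ.filter (fun q : Fin n => t q = ⊤)).min'_mem hFne
        simpa using this
      have hmin : ∀ q, t q = ⊤ → p ≤ q := fun q hq =>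
        (Finset.univ.filter (fun q : Fin n => t q = ⊤)).min'_le q (by simpa using hq)
      have hpi : p < i := lt_of_le_of_lt (hmin j1 htj1) hj1
      have hxi : mkx z t u i = 0 := by
        unfold mkx
        rw [if_pos hti, if_neg (fun h => (h j1 hj1) htj1)]
      rw [hxi]
      have hzero : ∀ q, p < q → mkx z t u q = 0 := by
        intro q hq
        unfold mkx
        rw [if_pos (ht p q hq.le hp), if_neg (fun h => (h p hq) hp)]
      have hsum : ∑ j ∈ Finset.Iio i, mkx z t u j = -z := by
        rw [sum_Iio_eq_of_zero hpi _ hzero]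
        have hxp : mkx z t u p
            = -z - ∑ j ∈ Finset.Iio p, (((t j).toNat : ℤ) - (u j : ℤ)) := by
          unfold mkx
          rw [if_pos hp,
            if_pos (fun q hq hq2 => absurd (hmin q hq2) (not_le.mpr hq))]
        have hsc : ∑ j ∈ Finset.Iio p, mkx z t u j
            = ∑ j ∈ Finset.Iio p, (((t j).toNat : ℤ) - (u j : ℤ)) := by
          apply Finset.sum_congr rfl
          intro q hq
          have hq' : t q ≠ ⊤ := fun h2 =>
            absurd (hmin q h2) (not_le.mpr (Finset.mem_Iio.mp hq))
          unfold mkx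
          rw [if_neg hq']
        rw [hsc, hxp]; ring
      rw [hsum]; ring
  · intro j hij
    show mkx z t u j = 0
    unfold mkx
    rw [if_pos (ht i j hij.le hti), if_neg (fun h => (h i hij) hti)]

def mkel (z : ℤ) (t : Fin n → ℕ∞) (u : Fin n → ℕ) (ht : NormT t) : Fgpd n :=
  ⟦⟨(z, mkx z t u, mks t u), okPos_mk z t u, condF_mk z u ht⟩⟧

lemma qzp_mkel (z : ℤ) (t : Fin n → ℕ∞) (u : Fin n → ℕ) (ht : NormT t) :
    qzp (mkel z t u ht) = z := rfl

lemma qxp_mkel (z : ℤ) (t : Fin n → ℕ∞) (u : Fin n → ℕ) (ht : NormT t) :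
    qxp (mkel z t u ht) = mkx z t u := rfl

lemma normT_mks {t : Fin n → ℕ∞} (u : Fin n → ℕ) (ht : NormT t) : NormT (mks t u) :=
  fun i j hij hi => mks_top_iff.mpr (ht i j hij (mks_top_iff.mp hi))

lemma qsrc_mkel (z : ℤ) (t : Fin n → ℕ∞) (u : Fin n → ℕ) (ht : NormT t) :
    qsrc (mkel z t u ht) = mks t u := by
  show qnu (mks t u) = mks t u
  exact qnu_eq_self (normT_mks u ht)

lemma qtgt_mkel (z : ℤ) (t : Fin n → ℕ∞) (u : Fin n → ℕ) (ht : NormT t) :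
    qtgt (mkel z t u ht) = t := by
  rw [qtgt_eq, qxp_mkel, qsrc_mkel]
  have haux : addxw (mkx z t u) (mks t u) = t := by
    funext i
    rw [addxw_apply]
    by_cases h : t i = ⊤
    · rw [show mks t u i = ⊤ from if_pos h, show addZN (mkx z t u i) ⊤ = ⊤ from if_pos rfl]
      exact h.symm
    · rw [show mks t u i = (u i : ℕ∞) from if_neg h, addZN_coe,
        show mkx z t u i = ((t i).toNat : ℤ) - (u i : ℤ) from if_neg h]
      rw [sub_add_cancel, Int.toNat_natCast]
      exact ENat.coe_toNat h
  rw [haux, qnu_eq_self ht]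

lemma qxp_finite (g : Fgpd n) (i : Fin n) (h : qsrc g i ≠ ⊤) :
    ((qtgt g i).toNat : ℤ) - ((qsrc g i).toNat : ℤ) = qxp g i := by
  have hs : qsrc g i = (((qsrc g i).toNat : ℕ) : ℕ∞) := (ENat.coe_toNat h).symm
  have hok : 0 ≤ qxp g i + ((qsrc g i).toNat : ℤ) := okPos_src g i _ hs
  have hni : ¬ ∃ j, j ≤ i ∧ addxw (qxp g) (qsrc g) j = ⊤ := by
    rintro ⟨j, hj, hw⟩
    rw [addxw_apply] at hw
    exact h (normT_qsrc g j i hj (addZN_top_iff.mp hw))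
  have htv : qtgt g i = (((qxp g i + ((qsrc g i).toNat : ℤ)).toNat : ℕ) : ℕ∞) := by
    rw [qtgt_eq, qnu_eq_of_not_top hni, addxw_apply]
    conv_lhs => rw [hs]
    rw [addZN_coe]
  rw [htv]
  simp only [ENat.toNat_coe]
  omega

lemma rep (g : Fgpd n) :
    g = mkel (qzp g) (qtgt g) (fun i => (qsrc g i).toNat) (normT_qtgt g) := by
  apply Fgpd.ext
  · rw [qzp_mkel]
  · rw [qxp_mkel]
    funext i
    by_cases hs : qsrc g i = ⊤
    · have hti : qtgt g i = ⊤ := (qtgt_top_iff g i).mpr hs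
      unfold mkx
      rw [if_pos hti]
      by_cases hf : ∀ j, j < i → qtgt g j ≠ ⊤
      · rw [if_pos hf, (condF_src g i hs).1]
        congr 1
        apply Finset.sum_congr rfl
        intro j hj
        exact (qxp_finite g j
          (fun h2 => (hf j (Finset.mem_Iio.mp hj)) ((qtgt_top_iff g j).mpr h2))).symm
      · rw [if_neg hf]
        push_neg at hf
        obtain ⟨j1, hj1, htj1⟩ := hf
        exact (condF_src g j1 ((qtgt_top_iff g j1).mp htj1)).2 i hj1
    · have hti : qtgt g i ≠ ⊤ := fun h2 => hs ((qtgt_top_iff g i).mp h2)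
      unfold mkx
      rw [if_neg hti]
      exact (qxp_finite g i hs).symm
  · rw [qsrc_mkel]
    funext i
    unfold mks
    by_cases hs : qsrc g i = ⊤
    · rw [if_pos ((qtgt_top_iff g i).mpr hs), hs]
    · rw [if_neg (fun h2 => hs ((qtgt_top_iff g i).mp h2))]
      exact (ENat.coe_toNat hs).symm

lemma mkel_congr (z : ℤ) (t : Fin n → ℕ∞) (u u' : Fin n → ℕ) (ht : NormT t)
    (hu : ∀ i, t i ≠ ⊤ → u i = u' i) : mkel z t u ht = mkel z t u' ht := by
  apply Fgpd.ext
  · rfl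
  · rw [qxp_mkel, qxp_mkel]
    funext i
    unfold mkx
    by_cases h : t i = ⊤
    · rw [if_pos h, if_pos h]
      by_cases hf : ∀ j, j < i → t j ≠ ⊤
      · rw [if_pos hf, if_pos hf]
        congr 1
        apply Finset.sum_congr rfl
        intro j hj
        rw [hu j (hf j (Finset.mem_Iio.mp hj))]
      · rw [if_neg hf, if_neg hf]
    · rw [if_neg h, if_neg h, hu i h]
  · rw [qsrc_mkel, qsrc_mkel]
    funext i
    unfold mks
    by_cases h : t i = ⊤
    · rw [if_pos h, if_pos h]
    · rw [if_neg h, if_neg h, hu i h]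

lemma eq_of_coords {g g' : Fgpd n} (hz : qzp g = qzp g') (ht : qtgt g = qtgt g')
    (hu : ∀ i : Fin n, qtgt g i ≠ ⊤ → (qsrc g i).toNat = (qsrc g' i).toNat) : g = g' := by
  rw [rep g, rep g',
    mkel_congr (qzp g) (qtgt g) (fun i => (qsrc g i).toNat)
      (fun i => (qsrc g' i).toNat) (normT_qtgt g) hu]
  congr 1

end S18

namespace S18

def TS (j K : ℕ) : Finset (Fin j → ℕ) :=
  (Fintype.piFinset fun _ : Fin j => Finset.range (K+1)).filter (fun a => ∑ i, a i ≤ K)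

lemma mem_TS {j K : ℕ} (a : Fin j → ℕ) : a ∈ TS j K ↔ ∑ i, a i ≤ K := by
  unfold TS
  rw [Finset.mem_filter]
  constructor
  · exact fun h => h.2
  · intro h
    refine ⟨Fintype.mem_piFinset.mpr (fun i => Finset.mem_range.mpr ?_), h⟩
    have : a i ≤ ∑ i', a i' :=
      Finset.single_le_sum (fun _ _ => Nat.zero_le _) (Finset.mem_univ i)
    omega

lemma card_fiber (j K v : ℕ) (hv : v ≤ K) :
    ((TS (j+1) K).filter (fun a => a 0 = v)).card = (TS j (K - v)).card := by
  apply Finset.card_bij (fun a _ => Fin.tail a)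
  · intro a ha
    rw [Finset.mem_filter, mem_TS] at ha
    obtain ⟨h1, h2⟩ := ha
    rw [mem_TS]
    have hsum : ∑ i, a i = a 0 + ∑ i : Fin j, a i.succ := Fin.sum_univ_succ a
    have : ∑ i : Fin j, Fin.tail a i = ∑ i : Fin j, a i.succ := rfl
    omega
  · intro a1 h1 a2 h2 heq
    rw [Finset.mem_filter] at h1 h2
    funext i
    rcases Fin.eq_zero_or_eq_succ i with rfl | ⟨q, rfl⟩
    · rw [h1.2, h2.2]
    · exact congrFun heq q
  · intro b hb
    rw [mem_TS] at hb
    refine ⟨Fin.cons v b, ?_, by funext q; rfl⟩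
    rw [Finset.mem_filter, mem_TS]
    constructor
    · rw [Fin.sum_univ_succ]
      simp only [Fin.cons_zero, Fin.cons_succ]
      omega
    · rfl

lemma card_TS (j : ℕ) : ∀ K : ℕ, (TS j K).card = (K + j).choose j := by
  induction j with
  | zero =>
    intro K
    have h : TS 0 K = {(fun i => i.elim0 : Fin 0 → ℕ)} := by
      apply Finset.ext
      intro a
      rw [mem_TS, Finset.mem_singleton]
      constructor
      · intro _; funext i; exact i.elim0
      · intro _; simp
    rw [h]
    simp
  | succ j ih =>
    intro K
    have hmemf : ∀ a ∈ TS (j+1) K, (fun a : Fin (j+1) → ℕ => a 0) a ∈ Finset.range (K+1) := by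
      intro a ha
      have ha' := (mem_TS a).mp ha
      rw [Finset.mem_range]
      have h0 : a 0 ≤ ∑ i, a i :=
        Finset.single_le_sum (fun _ _ => Nat.zero_le _) (Finset.mem_univ 0)
      exact Nat.lt_succ_of_le (le_trans h0 ha')
    rw [Finset.card_eq_sum_card_fiberwise hmemf]
    have hstep : ∑ v ∈ Finset.range (K+1), ((TS (j+1) K).filter (fun a => a 0 = v)).card
        = ∑ v ∈ Finset.range (K+1), (K - v + j).choose j := by
      apply Finset.sum_congr rfl
      intro v hv
      rw [card_fiber j K v (Nat.lt_succ_iff.mp (Finset.mem_range.mp hv)), ih (K - v)]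
    rw [hstep]
    have hrefl := Finset.sum_range_reflect (fun i => (i + j).choose j) (K + 1)
    have heq : ∀ v ∈ Finset.range (K+1), (K - v + j).choose j = (K + 1 - 1 - v + j).choose j := by
      intro v hv; rfl
    rw [Finset.sum_congr rfl heq, hrefl, Nat.sum_range_add_choose K j, Nat.add_assoc]

noncomputable def encE (j K : ℕ) : {a : Fin j → ℕ // ∑ i, a i ≤ K} ≃ Fin ((K + j).choose j) :=
  haveI : Fintype {a : Fin j → ℕ // ∑ i, a i ≤ K} := Fintype.subtype (TS j K) mem_TS
  Fintype.equivFinOfCardEq (by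
    rw [Fintype.card_of_subtype (TS j K) mem_TS, card_TS])

end S18

namespace S18

variable {n : ℕ}

def uu (g : Fgpd n) (i : ℕ) : ℕ := if h : i < n then (qsrc g ⟨i, h⟩).toNat else 0

def SS (g : Fgpd n) (j : ℕ) : ℕ := ∑ i ∈ Finset.range j, uu g i

def PP (k : ℕ) (g : Fgpd n) (j : ℕ) : Prop :=
  if h : j < n then (qsrc g ⟨j, h⟩ = ⊤ ∨ k ≤ SS g j + uu g j) else False

instance (k : ℕ) (g : Fgpd n) (j : ℕ) : Decidable (PP k g j) := by
  unfold PP; infer_instance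

lemma uu_fin (g : Fgpd n) (i : Fin n) : uu g i = (qsrc g i).toNat := by
  unfold uu
  rw [dif_pos i.isLt]

lemma SS_succ (g : Fgpd n) (j : ℕ) : SS g (j+1) = SS g j + uu g j :=
  Finset.sum_range_succ _ _

lemma PP_iff {k j : ℕ} (g : Fgpd n) (hj : j < n) :
    PP k g j ↔ (qsrc g ⟨j, hj⟩ = ⊤ ∨ k ≤ SS g j + uu g j) := by
  unfold PP; rw [dif_pos hj]

lemma not_PP {k i : ℕ} {g : Fgpd n} (hi : i < n) (h : ¬ PP k g i) :
    qsrc g ⟨i, hi⟩ ≠ ⊤ ∧ SS g i + uu g i < k := by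
  rw [PP_iff g hi] at h
  push_neg at h
  exact h

lemma sum_fin_uu (g : Fgpd n) (j : ℕ) : (∑ i : Fin j, uu g i.val) = SS g j :=
  Fin.sum_univ_eq_sum_range (fun i => uu g i) j

lemma SS_lt_k {k : ℕ} {g : Fgpd n} {j : ℕ} (hjn : j ≤ n)
    (H : ∀ i, i < j → ¬ PP k g i) (hk : 0 < k) : SS g j < k := by
  cases j with
  | zero => simpa [SS] using hk
  | succ i =>
    have h2 := (not_PP (by omega) (H i (Nat.lt_succ_self i))).2
    rw [SS_succ]
    exact h2

noncomputable def cls (k l : ℕ) (g : Fgpd n) : ℕ × ℕ × ℕ :=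
  if h : ∃ j, j < l ∧ PP k g j then
    (0, Nat.find h,
      if hs : (∑ i : Fin (Nat.find h), uu g i.val) ≤ k - 1 then
        ((encE (Nat.find h) (k-1) ⟨fun i => uu g i.val, hs⟩ : Fin _) : ℕ)
      else 0)
  else
    (1, k - SS g l,
      if hs : (∑ i : Fin (l-1), uu g i.val) ≤ k - (k - SS g l) then
        ((encE (l-1) (k - (k - SS g l)) ⟨fun i => uu g i.val, hs⟩ : Fin _) : ℕ)
      else 0)

lemma cls0_elim {k l : ℕ} (hk : 0 < k) (hln : l ≤ n) {g : Fgpd n} {jj c : ℕ}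
    (h : cls k l g = (0, jj, c)) :
    jj < l ∧ PP k g jj ∧ (∀ i, i < jj → ¬ PP k g i) ∧
    ∃ hs : (∑ i : Fin jj, uu g i.val) ≤ k - 1,
      ((encE jj (k-1) ⟨fun i => uu g i.val, hs⟩ : Fin _) : ℕ) = c := by
  unfold cls at h
  split at h
  · next hex =>
    rw [Prod.ext_iff, Prod.ext_iff] at h
    obtain ⟨-, h2, h3⟩ := h
    simp only at h2 h3
    subst h2
    have hspec := Nat.find_spec hex
    have hmin : ∀ i, i < Nat.find hex → ¬ PP k g i := fun i hi hP =>
      Nat.find_min hex hi ⟨lt_trans hi hspec.1, hP⟩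
    refine ⟨hspec.1, hspec.2, hmin, ?_⟩
    split at h3
    · next hs => exact ⟨hs, h3⟩
    · next hs =>
      exfalso
      apply hs
      rw [sum_fin_uu]
      have hlt := SS_lt_k (le_of_lt (lt_of_lt_of_le hspec.1 hln)) hmin hk
      omega
  · next hex =>
    rw [Prod.ext_iff] at h
    simp only at h
    exact absurd h.1 one_ne_zero

end S18

namespace S18

variable {n : ℕ}

lemma SS_pred {l : ℕ} (hl1 : 1 ≤ l) (g : Fgpd n) :
    SS g l = SS g (l-1) + uu g (l-1) := by
  conv_lhs => rw [← Nat.succ_pred_eq_of_pos hl1]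
  exact SS_succ g (l-1)

lemma cls1_elim {k l : ℕ} (hk : 0 < k) (hl1 : 1 ≤ l) (hln : l ≤ n) {g : Fgpd n} {m c : ℕ}
    (h : cls k l g = (1, m, c)) :
    (∀ i, i < l → ¬ PP k g i) ∧ SS g l = k - m ∧ 1 ≤ m ∧ m ≤ k ∧
    ∃ hs : (∑ i : Fin (l-1), uu g i.val) ≤ k - m,
      ((encE (l-1) (k-m) ⟨fun i => uu g i.val, hs⟩ : Fin _) : ℕ) = c := by
  unfold cls at h
  split at h
  · next hex =>
    rw [Prod.ext_iff] at h
    simp only at h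
    exact absurd h.1 zero_ne_one
  · next hex =>
    push_neg at hex
    have H : ∀ i, i < l → ¬ PP k g i := fun i hi => hex i hi
    have hSS : SS g l < k := SS_lt_k hln H hk
    rw [Prod.ext_iff, Prod.ext_iff] at h
    obtain ⟨-, h2, h3⟩ := h
    simp only at h2 h3
    have hrw : k - (k - SS g l) = k - m := by omega
    rw [hrw] at h3
    refine ⟨H, by omega, by omega, by omega, ?_⟩
    split at h3
    · next hs => exact ⟨hs, h3⟩
    · next hs =>
      exfalso
      apply hs
      rw [sum_fin_uu]
      have hpred := SS_pred hl1 g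
      omega

lemma cls0_intro {k l : ℕ} {g : Fgpd n} {jj c : ℕ}
    (hjl : jj < l) (hP : PP k g jj) (hmin : ∀ i, i < jj → ¬ PP k g i)
    (hs : (∑ i : Fin jj, uu g i.val) ≤ k - 1)
    (hc : ((encE jj (k-1) ⟨fun i => uu g i.val, hs⟩ : Fin _) : ℕ) = c) :
    cls k l g = (0, jj, c) := by
  have hex : ∃ j, j < l ∧ PP k g j := ⟨jj, hjl, hP⟩
  have hfind : Nat.find hex = jj := by
    rw [Nat.find_eq_iff]
    exact ⟨⟨hjl, hP⟩, fun i hi hA => hmin i hi hA.2⟩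
  subst hfind
  subst hc
  unfold cls
  rw [dif_pos hex, dif_pos hs]

lemma cls1_intro {k l : ℕ} (hk : 0 < k) (hln : l ≤ n) {g : Fgpd n} {m c : ℕ}
    (H : ∀ i, i < l → ¬ PP k g i)
    (hm : m = k - SS g l)
    (hs : (∑ i : Fin (l-1), uu g i.val) ≤ k - m)
    (hc : ((encE (l-1) (k-m) ⟨fun i => uu g i.val, hs⟩ : Fin _) : ℕ) = c) :
    cls k l g = (1, m, c) := by
  have hex : ¬ ∃ j, j < l ∧ PP k g j := by
    rintro ⟨j, hj, hPj⟩
    exact H j hj hPj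
  subst hm
  subst hc
  unfold cls
  rw [dif_neg hex, dif_pos hs]

end S18

namespace S18

variable {n : ℕ}

lemma uu_mkel (z : ℤ) (t : Fin n → ℕ∞) (v : Fin n → ℕ) (ht : NormT t) (i : Fin n) :
    uu (mkel z t v ht) i.val = if t i = ⊤ then 0 else v i := by
  rw [uu_fin, qsrc_mkel]
  unfold mks
  split
  · rfl
  · simp

noncomputable def phi0 (k jj : ℕ) (g : Fgpd n) : Fgpd n :=
  mkel 0 (qtgt g)
    (fun i => if i.val < jj then 0 else if i.val = jj then uu g i.val + SS g jj - k else uu g i.val)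
    (normT_qtgt g)

noncomputable def phi1 (l m : ℕ) (g : Fgpd n) : Fgpd n :=
  mkel (m : ℤ) (qtgt g) (fun i => if i.val < l then 0 else uu g i.val) (normT_qtgt g)

lemma qtgt_phi0 (k jj : ℕ) (g : Fgpd n) : qtgt (phi0 k jj g) = qtgt g := qtgt_mkel _ _ _ _
lemma qtgt_phi1 (l m : ℕ) (g : Fgpd n) : qtgt (phi1 l m g) = qtgt g := qtgt_mkel _ _ _ _

lemma qsrc_ne_top_of_not_PP {k : ℕ} {g : Fgpd n} {i : Fin n} (h : ¬ PP k g i.val) :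
    qsrc g i ≠ ⊤ := by
  have := (not_PP i.isLt h).1
  simpa using this

lemma maps0 {k l jj c : ℕ} (hk : 0 < k) (hln : l ≤ n) {g : Fgpd n}
    (hg : cls k l g = (0, jj, c)) : phi0 k jj g ∈ Fkj n 0 jj := by
  obtain ⟨hjl, hP, hmin, -⟩ := cls0_elim hk hln hg
  constructor
  · exact qzp_mkel _ _ _ _
  · intro i hi
    have hsne : qsrc g i ≠ ⊤ := qsrc_ne_top_of_not_PP (hmin i.val hi)
    have htne : qtgt g i ≠ ⊤ := fun h2 => hsne ((qtgt_top_iff g i).mp h2)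
    show qsrc (mkel _ _ _ _) i = 0
    rw [qsrc_mkel]
    unfold mks
    simp [hi, htne]

lemma maps1 {k l m c : ℕ} (hk : 0 < k) (hl1 : 1 ≤ l) (hln : l ≤ n) {g : Fgpd n}
    (hg : cls k l g = (1, m, c)) : phi1 l m g ∈ Fkj n (m : ℤ) l := by
  obtain ⟨H, -, -, -, -⟩ := cls1_elim hk hl1 hln hg
  constructor
  · exact qzp_mkel _ _ _ _
  · intro i hi
    have hsne : qsrc g i ≠ ⊤ := qsrc_ne_top_of_not_PP (H i.val hi)
    have htne : qtgt g i ≠ ⊤ := fun h2 => hsne ((qtgt_top_iff g i).mp h2)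
    show qsrc (mkel _ _ _ _) i = 0
    rw [qsrc_mkel]
    unfold mks
    simp [hi, htne]

end S18

namespace S18

variable {n : ℕ}

lemma inj0 {k l jj c : ℕ} (hk : 0 < k) (hln : l ≤ n) {g g' : Fgpd n}
    (hzg : qzp g = (k : ℤ)) (hg : cls k l g = (0, jj, c))
    (hzg' : qzp g' = (k : ℤ)) (hg' : cls k l g' = (0, jj, c))
    (heq : phi0 k jj g = phi0 k jj g') : g = g' := by
  obtain ⟨hjl, hP, hmin, hs, hcv⟩ := cls0_elim hk hln hg
  obtain ⟨-, hP', hmin', hs', hcv'⟩ := cls0_elim hk hln hg'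
  have hjn : jj < n := lt_of_lt_of_le hjl hln
  have ht : qtgt g = qtgt g' := by
    rw [← qtgt_phi0 k jj g, ← qtgt_phi0 k jj g', heq]
  have hfinEq : (encE jj (k-1)) ⟨fun i => uu g i.val, hs⟩
      = (encE jj (k-1)) ⟨fun i => uu g' i.val, hs'⟩ :=
    Fin.ext (by rw [hcv, hcv'])
  have hpre : ∀ q : Fin jj, uu g q.val = uu g' q.val := by
    intro q
    have h2 := congrArg Subtype.val ((encE jj (k-1)).injective hfinEq)
    exact congrFun h2 q
  have hpreN : ∀ q, q < jj → uu g q = uu g' q := fun q hq => hpre ⟨q, hq⟩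
  have hSSeq : ∀ q, q ≤ jj → SS g q = SS g' q := by
    intro q hq
    unfold SS
    apply Finset.sum_congr rfl
    intro x hx
    exact hpreN x (lt_of_lt_of_le (Finset.mem_range.mp hx) hq)
  have hsrc := congrArg qsrc heq
  unfold phi0 at hsrc
  rw [qsrc_mkel, qsrc_mkel] at hsrc
  apply eq_of_coords (hzg.trans hzg'.symm) ht
  intro i hti
  have hti' : qtgt g' i ≠ ⊤ := ht ▸ hti
  rw [← uu_fin, ← uu_fin]
  have hv := congrFun hsrc i
  unfold mks at hv
  rw [if_neg hti, if_neg hti'] at hv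
  have hvn : (if i.val < jj then 0 else if i.val = jj then uu g i.val + SS g jj - k
        else uu g i.val)
      = (if i.val < jj then 0 else if i.val = jj then uu g' i.val + SS g' jj - k
        else uu g' i.val) := by
    exact_mod_cast hv
  rcases lt_trichotomy i.val jj with h1 | h2 | h3
  · exact hpreN i.val h1
  · simp only [if_neg (show ¬ (i.val < jj) by omega), if_pos h2] at hvn
    have hsneq : qsrc g i ≠ ⊤ := fun hx => hti ((qtgt_top_iff g i).mpr hx)
    have hsneq' : qsrc g' i ≠ ⊤ := fun hx => hti' ((qtgt_top_iff g' i).mpr hx)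
    have hieq : (⟨jj, hjn⟩ : Fin n) = i := Fin.ext h2.symm
    have hkle : k ≤ SS g jj + uu g jj := by
      rcases (PP_iff g hjn).mp hP with htop | hge
      · exact absurd (hieq ▸ htop) hsneq
      · exact hge
    have hkle' : k ≤ SS g' jj + uu g' jj := by
      rcases (PP_iff g' hjn).mp hP' with htop | hge
      · exact absurd (hieq ▸ htop) hsneq'
      · exact hge
    have e1 : uu g i.val = uu g jj := by rw [h2]
    have e2 : uu g' i.val = uu g' jj := by rw [h2]
    have e3 : SS g jj = SS g' jj := hSSeq jj le_rfl
    omega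
  · simp only [if_neg (show ¬ (i.val < jj) by omega), if_neg (show ¬ (i.val = jj) by omega)] at hvn
    exact hvn

lemma inj1 {k l m c : ℕ} (hk : 0 < k) (hl1 : 1 ≤ l) (hln : l ≤ n) {g g' : Fgpd n}
    (hzg : qzp g = (k : ℤ)) (hg : cls k l g = (1, m, c))
    (hzg' : qzp g' = (k : ℤ)) (hg' : cls k l g' = (1, m, c))
    (heq : phi1 l m g = phi1 l m g') : g = g' := by
  obtain ⟨H, hSl, hm1, hmk, hs, hcv⟩ := cls1_elim hk hl1 hln hg
  obtain ⟨H', hSl', -, -, hs', hcv'⟩ := cls1_elim hk hl1 hln hg'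
  have ht : qtgt g = qtgt g' := by
    rw [← qtgt_phi1 l m g, ← qtgt_phi1 l m g', heq]
  have hfinEq : (encE (l-1) (k-m)) ⟨fun i => uu g i.val, hs⟩
      = (encE (l-1) (k-m)) ⟨fun i => uu g' i.val, hs'⟩ :=
    Fin.ext (by rw [hcv, hcv'])
  have hpre : ∀ q : Fin (l-1), uu g q.val = uu g' q.val := by
    intro q
    have h2 := congrArg Subtype.val ((encE (l-1) (k-m)).injective hfinEq)
    exact congrFun h2 q
  have hpreN : ∀ q, q < l-1 → uu g q = uu g' q := fun q hq => hpre ⟨q, hq⟩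
  have hSSeq : ∀ q, q ≤ l-1 → SS g q = SS g' q := by
    intro q hq
    unfold SS
    apply Finset.sum_congr rfl
    intro x hx
    exact hpreN x (lt_of_lt_of_le (Finset.mem_range.mp hx) hq)
  have hul1 : uu g (l-1) = uu g' (l-1) := by
    have p1 := SS_pred hl1 g
    have p2 := SS_pred hl1 g'
    have p3 := hSSeq (l-1) le_rfl
    omega
  have hsrc := congrArg qsrc heq
  unfold phi1 at hsrc
  rw [qsrc_mkel, qsrc_mkel] at hsrc
  apply eq_of_coords (hzg.trans hzg'.symm) ht
  intro i hti
  have hti' : qtgt g' i ≠ ⊤ := ht ▸ hti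
  rw [← uu_fin, ← uu_fin]
  by_cases hlt : i.val < l
  · rcases Nat.lt_or_ge i.val (l-1) with h1 | h2
    · exact hpreN i.val h1
    · have : i.val = l - 1 := by omega
      rw [this]
      exact hul1
  · have hv := congrFun hsrc i
    unfold mks at hv
    rw [if_neg hti, if_neg hti'] at hv
    have hvn : (if i.val < l then 0 else uu g i.val)
        = (if i.val < l then 0 else uu g' i.val) := by exact_mod_cast hv
    simp only [if_neg hlt] at hvn
    exact hvn

end S18

namespace S18

variable {n : ℕ}

lemma surj0 {k l jj c : ℕ} (hk : 0 < k) (hl1 : 1 ≤ l) (hln : l ≤ n) (hjl : jj < l)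
    (hc : c < Nat.choose (k + jj - 1) jj) {h : Fgpd n} (hh : h ∈ Fkj n 0 jj) :
    ∃ g : Fgpd n, (qzp g = (k : ℤ) ∧ cls k l g = (0, jj, c)) ∧ phi0 k jj g = h := by
  obtain ⟨hz0, hsrc0⟩ := hh
  have hjn : jj < n := lt_of_lt_of_le hjl hln
  have hc' : c < (k - 1 + jj).choose jj := by
    have hee : k - 1 + jj = k + jj - 1 := by omega
    rw [hee]; exact hc
  set a := (encE jj (k-1)).symm ⟨c, hc'⟩ with ha
  set Avec : ℕ → ℕ := fun q => if hq : q < jj then a.val ⟨q, hq⟩ else 0 with hAvec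
  set v : Fin n → ℕ := fun i =>
    if hij : i.val < jj then a.val ⟨i.val, hij⟩
    else if i.val = jj then (k - ∑ q, a.val q) + uu h i.val else uu h i.val with hv
  set g := mkel (k : ℤ) (qtgt h) v (normT_qtgt h) with hgdef
  have hfin : ∀ i : Fin n, i.val < jj → qtgt h i ≠ ⊤ := by
    intro i hi h2
    have h3 := (qtgt_top_iff h i).mp h2
    rw [hsrc0 i hi] at h3
    exact absurd h3 (by simp)
  have htg : qtgt g = qtgt h := qtgt_mkel _ _ _ _
  have huug : ∀ i : Fin n, uu g i.val = if qtgt h i = ⊤ then 0 else v i :=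
    fun i => uu_mkel _ _ _ _ i
  have huuglt : ∀ q, q < jj → uu g q = Avec q := by
    intro q hq
    have hqn : q < n := lt_of_lt_of_le hq (le_of_lt hjn)
    have h2 := huug ⟨q, hqn⟩
    rw [if_neg (hfin ⟨q, hqn⟩ hq)] at h2
    rw [h2]
    show v ⟨q, hqn⟩ = Avec q
    simp only [hv, hAvec]
    rw [dif_pos hq, dif_pos hq]
  have hSa : (∑ q, a.val q) ≤ k - 1 := a.property
  have hSuma : (∑ q, a.val q) = ∑ x ∈ Finset.range jj, Avec x := by
    rw [← Fin.sum_univ_eq_sum_range Avec jj]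
    apply Finset.sum_congr rfl
    intro q _
    simp only [hAvec]
    rw [dif_pos q.isLt]
  have hSSa : ∀ q, q ≤ jj → SS g q = ∑ x ∈ Finset.range q, Avec x := by
    intro q hq
    unfold SS
    apply Finset.sum_congr rfl
    intro x hx
    exact huuglt x (lt_of_lt_of_le (Finset.mem_range.mp hx) hq)
  have hSSjj : SS g jj = ∑ q, a.val q := by rw [hSSa jj le_rfl, hSuma]
  have hnot : ∀ q, q < jj → ¬ PP k g q := by
    intro q hq hPq
    have hqn : q < n := lt_of_lt_of_le hq (le_of_lt hjn)
    rw [PP_iff g hqn] at hPq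
    have hqsrc : qsrc g ⟨q, hqn⟩ ≠ ⊤ := by
      rw [hgdef, qsrc_mkel]
      unfold mks
      rw [if_neg (hfin ⟨q, hqn⟩ hq)]
      simp
    rcases hPq with htop | hge
    · exact hqsrc htop
    · have h1 : SS g q + uu g q = ∑ x ∈ Finset.range (q+1), Avec x := by
        rw [hSSa q hq.le, huuglt q hq, Finset.sum_range_succ]
      have h2 : ∑ x ∈ Finset.range (q+1), Avec x ≤ ∑ x ∈ Finset.range jj, Avec x :=
        Finset.sum_le_sum_of_subset (Finset.range_subset_range.mpr hq)
      omega
  have hPjj : PP k g jj := by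
    rw [PP_iff g hjn]
    by_cases htop : qtgt h ⟨jj, hjn⟩ = ⊤
    · left
      rw [hgdef, qsrc_mkel]
      unfold mks
      rw [if_pos htop]
    · right
      have huujj : uu g jj = (k - ∑ q, a.val q) + uu h jj := by
        have h2 := huug ⟨jj, hjn⟩
        rw [if_neg htop] at h2
        rw [h2]
        show v ⟨jj, hjn⟩ = _
        simp [hv]
      omega
  have hzg : qzp g = (k : ℤ) := qzp_mkel _ _ _ _
  have hcls : cls k l g = (0, jj, c) := by
    have hsv : (∑ i : Fin jj, uu g i.val) ≤ k - 1 := by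
      rw [sum_fin_uu, hSSjj]; exact hSa
    apply cls0_intro hjl hPjj hnot hsv
    have hfun : (fun i : Fin jj => uu g i.val) = a.val := by
      funext q
      rw [huuglt q.val q.isLt]
      simp only [hAvec]
      rw [dif_pos q.isLt]
    have hsub : (⟨fun i : Fin jj => uu g i.val, hsv⟩ :
        {b : Fin jj → ℕ // ∑ i, b i ≤ k - 1}) = a := Subtype.ext hfun
    rw [hsub, ha, Equiv.apply_symm_apply]
  have hphi : phi0 k jj g = h := by
    apply eq_of_coords
    · rw [hz0]; exact qzp_mkel _ _ _ _
    · rw [qtgt_phi0, htg]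
    · intro i hti
      rw [qtgt_phi0, htg] at hti
      have hgi : qtgt g i ≠ ⊤ := by rw [htg]; exact hti
      rw [← uu_fin, ← uu_fin]
      rw [show uu (phi0 k jj g) i.val = if qtgt g i = ⊤ then 0
          else (if i.val < jj then 0 else if i.val = jj then uu g i.val + SS g jj - k
            else uu g i.val)
        from uu_mkel _ _ _ _ i, if_neg hgi]
      rcases lt_trichotomy i.val jj with h1 | h2 | h3
      · rw [if_pos h1, uu_fin, hsrc0 i h1]
        rfl
      · rw [if_neg (by omega), if_pos h2]
        have huujj : uu g i.val = (k - ∑ q, a.val q) + uu h i.val := by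
          have h4 := huug i
          rw [if_neg hti] at h4
          rw [h4]
          show v i = _
          simp only [hv]
          rw [dif_neg (by omega), if_pos h2]
        rw [hSSjj]
        omega
      · rw [if_neg (by omega), if_neg (by omega)]
        have h4 := huug i
        rw [if_neg hti] at h4
        rw [h4]
        show v i = uu h i.val
        simp only [hv]
        rw [dif_neg (by omega), if_neg (by omega)]
  exact ⟨g, ⟨hzg, hcls⟩, hphi⟩

end S18

namespace S18

variable {n : ℕ}

lemma surj1 {k l m c : ℕ} (hk : 0 < k) (hl1 : 1 ≤ l) (hln : l ≤ n)
    (hm1 : 1 ≤ m) (hmk : m ≤ k) (hc : c < Nat.choose (k - m + l - 1) (l - 1))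
    {h : Fgpd n} (hh : h ∈ Fkj n (m : ℤ) l) :
    ∃ g : Fgpd n, (qzp g = (k : ℤ) ∧ cls k l g = (1, m, c)) ∧ phi1 l m g = h := by
  obtain ⟨hzm, hsrc0⟩ := hh
  have hc' : c < ((k - m) + (l - 1)).choose (l - 1) := by
    have hee : (k - m) + (l - 1) = k - m + l - 1 := by omega
    rw [hee]; exact hc
  set a := (encE (l-1) (k-m)).symm ⟨c, hc'⟩ with ha
  set Avec : ℕ → ℕ := fun q => if hq : q < l-1 then a.val ⟨q, hq⟩ else 0 with hAvec
  set v : Fin n → ℕ := fun i =>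
    if hij : i.val < l-1 then a.val ⟨i.val, hij⟩
    else if i.val = l-1 then (k - m) - (∑ q, a.val q) else uu h i.val with hv
  set g := mkel (k : ℤ) (qtgt h) v (normT_qtgt h) with hgdef
  have hl1n : l - 1 < n := by omega
  have hfin : ∀ i : Fin n, i.val < l → qtgt h i ≠ ⊤ := by
    intro i hi h2
    have h3 := (qtgt_top_iff h i).mp h2
    rw [hsrc0 i hi] at h3
    exact absurd h3 (by simp)
  have htg : qtgt g = qtgt h := qtgt_mkel _ _ _ _
  have huug : ∀ i : Fin n, uu g i.val = if qtgt h i = ⊤ then 0 else v i :=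
    fun i => uu_mkel _ _ _ _ i
  have huuglt : ∀ q, q < l-1 → uu g q = Avec q := by
    intro q hq
    have hqn : q < n := by omega
    have h2 := huug ⟨q, hqn⟩
    rw [if_neg (hfin ⟨q, hqn⟩ (show q < l by omega))] at h2
    rw [h2]
    show v ⟨q, hqn⟩ = Avec q
    simp only [hv, hAvec]
    rw [dif_pos hq, dif_pos hq]
  have hSa : (∑ q, a.val q) ≤ k - m := a.property
  have hSuma : (∑ q, a.val q) = ∑ x ∈ Finset.range (l-1), Avec x := by
    rw [← Fin.sum_univ_eq_sum_range Avec (l-1)]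
    apply Finset.sum_congr rfl
    intro q _
    simp only [hAvec]
    rw [dif_pos q.isLt]
  have hSSa : ∀ q, q ≤ l-1 → SS g q = ∑ x ∈ Finset.range q, Avec x := by
    intro q hq
    unfold SS
    apply Finset.sum_congr rfl
    intro x hx
    exact huuglt x (lt_of_lt_of_le (Finset.mem_range.mp hx) hq)
  have hSSl1 : SS g (l-1) = ∑ q, a.val q := by rw [hSSa (l-1) le_rfl, hSuma]
  have huul1 : uu g (l-1) = (k - m) - (∑ q, a.val q) := by
    have h2 := huug ⟨l-1, hl1n⟩
    rw [if_neg (hfin ⟨l-1, hl1n⟩ (show l-1 < l by omega))] at h2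
    rw [h2]
    show v ⟨l-1, hl1n⟩ = _
    simp [hv]
  have hSSl : SS g l = k - m := by
    rw [SS_pred hl1 g, hSSl1, huul1]
    omega
  have hnot : ∀ q, q < l → ¬ PP k g q := by
    intro q hq hPq
    have hqn : q < n := by omega
    rw [PP_iff g hqn] at hPq
    have hqsrc : qsrc g ⟨q, hqn⟩ ≠ ⊤ := by
      rw [hgdef, qsrc_mkel]
      unfold mks
      rw [if_neg (hfin ⟨q, hqn⟩ hq)]
      simp
    rcases hPq with htop | hge
    · exact hqsrc htop
    · rcases Nat.lt_or_ge q (l-1) with h1 | h2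
      · have e1 : SS g q + uu g q = ∑ x ∈ Finset.range (q+1), Avec x := by
          rw [hSSa q h1.le, huuglt q h1, Finset.sum_range_succ]
        have e2 : ∑ x ∈ Finset.range (q+1), Avec x ≤ ∑ x ∈ Finset.range (l-1), Avec x :=
          Finset.sum_le_sum_of_subset (Finset.range_subset_range.mpr h1)
        omega
      · have hq2 : q = l - 1 := by omega
        subst hq2
        rw [hSSl1, huul1] at hge
        omega
  have hzg : qzp g = (k : ℤ) := qzp_mkel _ _ _ _
  have hcls : cls k l g = (1, m, c) := by
    have hsv : (∑ i : Fin (l-1), uu g i.val) ≤ k - m := by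
      rw [sum_fin_uu, hSSl1]; exact hSa
    apply cls1_intro hk hln hnot (by omega) hsv
    have hfun : (fun i : Fin (l-1) => uu g i.val) = a.val := by
      funext q
      rw [huuglt q.val q.isLt]
      simp only [hAvec]
      rw [dif_pos q.isLt]
    have hsub : (⟨fun i : Fin (l-1) => uu g i.val, hsv⟩ :
        {b : Fin (l-1) → ℕ // ∑ i, b i ≤ k - m}) = a := Subtype.ext hfun
    rw [hsub, ha, Equiv.apply_symm_apply]
  have hphi : phi1 l m g = h := by
    apply eq_of_coords
    · rw [hzm]; exact qzp_mkel _ _ _ _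
    · rw [qtgt_phi1, htg]
    · intro i hti
      rw [qtgt_phi1, htg] at hti
      have hgi : qtgt g i ≠ ⊤ := by rw [htg]; exact hti
      rw [← uu_fin, ← uu_fin]
      rw [show uu (phi1 l m g) i.val = if qtgt g i = ⊤ then 0
          else (if i.val < l then 0 else uu g i.val)
        from uu_mkel _ _ _ _ i, if_neg hgi]
      by_cases hlt : i.val < l
      · rw [if_pos hlt, uu_fin, hsrc0 i hlt]
        rfl
      · rw [if_neg hlt]
        have h4 := huug i
        rw [if_neg hti] at h4
        rw [h4]
        show v i = uu h i.val
        simp only [hv]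
        rw [dif_neg (by omega), if_neg (by omega)]
  exact ⟨g, ⟨hzg, hcls⟩, hphi⟩

end S18

namespace S18

variable {n : ℕ}

lemma cls_valid {k l : ℕ} (hk : 0 < k) (hl1 : 1 ≤ l) (hln : l ≤ n) (g : Fgpd n) :
    Valid18 k l (cls k l g) := by
  unfold cls
  split
  · next hex =>
    left
    refine ⟨rfl, (Nat.find_spec hex).1, ?_⟩
    show (if hs : _ then _ else 0) < Nat.choose (k + Nat.find hex - 1) (Nat.find hex)
    split
    · next hs =>
      have hb := ((encE (Nat.find hex) (k-1)) ⟨fun i => uu g i.val, hs⟩).isLt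
      have hee : k - 1 + Nat.find hex = k + Nat.find hex - 1 := by omega
      rw [← hee]
      exact hb
    · next hs =>
      exfalso
      apply hs
      rw [sum_fin_uu]
      have hmin : ∀ i, i < Nat.find hex → ¬ PP k g i := fun i hi hP =>
        Nat.find_min hex hi ⟨lt_trans hi (Nat.find_spec hex).1, hP⟩
      have hlt := SS_lt_k (le_of_lt (lt_of_lt_of_le (Nat.find_spec hex).1 hln)) hmin hk
      omega
  · next hex =>
    right
    push_neg at hex
    have hSS : SS g l < k := SS_lt_k hln (fun i hi => hex i hi) hk
    refine ⟨rfl, show 1 ≤ k - SS g l by omega, show k - SS g l ≤ k by omega, ?_⟩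
    show (if hs : _ then _ else 0) < Nat.choose (k - (k - SS g l) + l - 1) (l - 1)
    split
    · next hs =>
      have hb := ((encE (l-1) (k - (k - SS g l))) ⟨fun i => uu g i.val, hs⟩).isLt
      have hee : k - (k - SS g l) + (l-1) = k - (k - SS g l) + l - 1 := by omega
      rw [← hee]
      exact hb
    · next hs =>
      exfalso
      apply hs
      rw [sum_fin_uu]
      have hpred := SS_pred hl1 g
      omega

end S18



/-- For `k > 0` and `1 ≤ l ≤ n`, the set `(F_n)_k` is the disjoint
union of subsets: for each `0 ≤ j ≤ l - 1`, exactly `binom(k + j - 1, j)` of them each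
admit a target-preserving bijection onto `(F_n)_{0,j}`, and for each `1 ≤ m ≤ k`,
exactly `binom(k - m + l - 1, l - 1)` of them each admit a target-preserving bijection
onto `(F_n)_{m,l}`. -/
theorem stmt18 (n : ℕ) (hn : 1 ≤ n) (k : ℕ) (hk : 0 < k)
    (l : ℕ) (hl1 : 1 ≤ l) (hln : l ≤ n) :
    ∃ A : ℕ × ℕ × ℕ → Set (Fgpd n),
      (∀ q q' : ℕ × ℕ × ℕ, Valid18 k l q → Valid18 k l q' → q ≠ q' →
        Disjoint (A q) (A q')) ∧
      (⋃ q ∈ {q : ℕ × ℕ × ℕ | Valid18 k l q}, A q) = {g : Fgpd n | qzp g = (k : ℤ)} ∧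
      (∀ jj c : ℕ, jj < l → c < Nat.choose (k + jj - 1) jj →
        ∃ φ : Fgpd n → Fgpd n, Set.BijOn φ (A (0, jj, c)) (Fkj n 0 jj) ∧
          ∀ g ∈ A (0, jj, c), qtgt (φ g) = qtgt g) ∧
      (∀ m c : ℕ, 1 ≤ m → m ≤ k → c < Nat.choose (k - m + l - 1) (l - 1) →
        ∃ φ : Fgpd n → Fgpd n, Set.BijOn φ (A (1, m, c)) (Fkj n m l) ∧
          ∀ g ∈ A (1, m, c), qtgt (φ g) = qtgt g) := by
  classical
  refine ⟨fun q => {g : Fgpd n | qzp g = (k : ℤ) ∧ S18.cls k l g = q}, ?_, ?_, ?_, ?_⟩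
  · intro q q' _ _ hne
    rw [Set.disjoint_left]
    rintro g ⟨-, h1⟩ ⟨-, h2⟩
    exact hne (h1 ▸ h2 ▸ rfl)
  · apply Set.ext
    intro g
    simp only [Set.mem_iUnion, Set.mem_setOf_eq]
    constructor
    · rintro ⟨q, -, hz, -⟩
      exact hz
    · intro hz
      exact ⟨S18.cls k l g, S18.cls_valid hk hl1 hln g, hz, rfl⟩
  · intro jj c hjl hc
    refine ⟨S18.phi0 k jj, ⟨?_, ?_, ?_⟩, fun g _ => S18.qtgt_phi0 k jj g⟩
    · intro g hg
      exact S18.maps0 hk hln hg.2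
    · intro g hg g' hg' heq
      exact S18.inj0 hk hln hg.1 hg.2 hg'.1 hg'.2 heq
    · intro h hh
      obtain ⟨g, hgA, hphi⟩ := S18.surj0 hk hl1 hln hjl hc hh
      exact ⟨g, hgA, hphi⟩
  · intro m c hm1 hmk hc
    refine ⟨S18.phi1 l m, ⟨?_, ?_, ?_⟩, fun g _ => S18.qtgt_phi1 l m g⟩
    · intro g hg
      exact S18.maps1 hk hl1 hln hg.2
    · intro g hg g' hg' heq
      exact S18.inj1 hk hl1 hln hg.1 hg.2 hg'.1 hg'.2 heq
    · intro h hh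
      obtain ⟨g, hgA, hphi⟩ := S18.surj1 hk hl1 hln hm1 hmk hc hh
      exact ⟨g, hgA, hphi⟩
end
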